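/- arXiv:2406.12615 — 10 statements merged into one kernel-verified Lean document; each statement's English description precedes it below -/
import Mathlib

section
/- Let f : ℝ^D → ℝ be a two-layer bias-free leaky ReLU network, f(x) = ∑_{h=1}^H w_{2h}·σ(w_{1h}ᵀx) with σ(z) = max(z, αz), α ∈ [0,1]. If f is odd, i.e., f(-x) = -f(x) for all x ∈ ℝ^D, then f is linear: f(x) = ((1+α)/2)·∑_h w_{2h}(w_{1h}ᵀx) for all x ∈ ℝ^D. -/
open Finset

/-- `max (-z) (a * -z) = -min z (a * z)`, and `max` and `min` of `z, a * z` add up to `z + a * z`. -/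
lemma max_mul_sub_max_neg_mul {R : Type*} [Ring R] [LinearOrder R] [IsOrderedRing R] (a z : R) :
    max z (a * z) - max (-z) (a * -z) = (1 + a) * z := by
  rw [mul_neg, max_neg_neg, sub_neg_eq_add, max_add_min]
  noncomm_ring

lemma sum_mul_max_mul_sub_sum_mul_max_neg_mul {R ι : Type*} [CommRing R] [LinearOrder R]
    [IsOrderedRing R] (s : Finset ι) (a : R) (w z : ι → R) :
    ∑ h ∈ s, w h * max (z h) (a * z h) - ∑ h ∈ s, w h * max (-z h) (a * -z h)
      = (1 + a) * ∑ h ∈ s, w h * z h := by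
  rw [← sum_sub_distrib, mul_sum]
  refine sum_congr rfl fun h _ => ?_
  rw [← mul_sub, max_mul_sub_max_neg_mul, mul_left_comm]

theorem stmt_1_general (D H : ℕ) (α : ℝ)
    (w1 : Fin H → Fin D → ℝ) (w2 : Fin H → ℝ)
    (f : (Fin D → ℝ) → ℝ)
    (hf : ∀ x, f x = ∑ h, w2 h * max (∑ i, w1 h i * x i) (α * ∑ i, w1 h i * x i))
    (hodd : ∀ x, f (-x) = -f x) :
    ∀ x, f x = ((1 + α) / 2) * ∑ h, w2 h * ∑ i, w1 h i * x i := by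
  intro x
  have hneg : ∀ h, ∑ i, w1 h i * (-x) i = -∑ i, w1 h i * x i := fun h => by
    simp only [Pi.neg_apply, mul_neg, sum_neg_distrib]
  have hdiff := sum_mul_max_mul_sub_sum_mul_max_neg_mul univ α w2 fun h => ∑ i, w1 h i * x i
  simp only [← hneg, ← hf] at hdiff
  rw [hodd] at hdiff
  linarith

/-- If a two-layer bias-free leaky ReLU network is odd, it is linear:
f(x) = ((1+α)/2)·∑_h w₂ₕ (w₁ₕᵀx). -/
theorem stmt_1 (D H : ℕ) (α : ℝ) (hα : α ∈ Set.Icc (0 : ℝ) 1)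
    (w1 : Fin H → Fin D → ℝ) (w2 : Fin H → ℝ)
    (f : (Fin D → ℝ) → ℝ)
    (hf : ∀ x, f x = ∑ h, w2 h * max (∑ i, w1 h i * x i) (α * ∑ i, w1 h i * x i))
    (hodd : ∀ x, f (-x) = -f x) :
    ∀ x, f x = ((1 + α) / 2) * ∑ h, w2 h * ∑ i, w1 h i * x i :=
  stmt_1_general D H α w1 w2 f hf hodd
end

section
/- Let σ₀(z) = max(z, 0) and define g : ℝ² → ℝ by g(x₁, x₂) = σ₀(σ₀(x₁) − σ₀(x₂)) − σ₀(σ₀(−x₁) − σ₀(−x₂)). Then g is not linear (for instance g(1,0) = 1, g(0,1) = 0, g(1,1) = 0), and consequently no two-layer bias-free leaky ReLU network equals g: for every H, every α ∈ [0,1], and all weights w_{1h} ∈ ℝ², w_{2h} ∈ ℝ, the function x ↦ ∑_{h=1}^H w_{2h}·max(w_{1h}ᵀx, α·w_{1h}ᵀx) differs from g at some point of ℝ². -/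
/-!
Since `max a b - max (-a) (-b) = max a b + min a b = a + b`, every leaky ReLU `σ` satisfies
`σ z - σ (-z) = (1 + α) z`, so the odd part `x ↦ f x - f (-x)` of a bias-free two-layer network
`f` is linear. The odd part of `g` is not additive: it vanishes at `(1, 1)` and at `(0, 1)` but
equals `2` at `(1, 0)`.
-/

open Finset

lemma max_sub_max_neg {α : Type*} [AddCommGroup α] [LinearOrder α] [IsOrderedAddMonoid α]
    (a b : α) : max a b - max (-a) (-b) = a + b := by
  rw [max_neg_neg, sub_neg_eq_add, add_comm, min_add_max]

def leakyReluNet {ι κ : Type*} [Fintype ι] [Fintype κ] (α : ℝ) (w1 : κ → ι → ℝ) (w2 : κ → ℝ)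
    (x : ι → ℝ) : ℝ :=
  ∑ h, w2 h * max (∑ i, w1 h i * x i) (α * ∑ i, w1 h i * x i)

section leakyReluNet

variable {ι κ : Type*} [Fintype ι] [Fintype κ] (α : ℝ) (w1 : κ → ι → ℝ) (w2 : κ → ℝ)

lemma leakyReluNet_sub_neg (x : ι → ℝ) :
    leakyReluNet α w1 w2 x - leakyReluNet α w1 w2 (-x) =
      (1 + α) * ∑ h, w2 h * ∑ i, w1 h i * x i := by
  simp only [leakyReluNet, Pi.neg_apply, mul_neg, sum_neg_distrib, ← sum_sub_distrib, ← mul_sub,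
    max_sub_max_neg]
  rw [mul_sum]
  exact sum_congr rfl fun h _ => by ring

lemma leakyReluNet_sub_neg_add (x y : ι → ℝ) :
    leakyReluNet α w1 w2 (x + y) - leakyReluNet α w1 w2 (-(x + y)) =
      (leakyReluNet α w1 w2 x - leakyReluNet α w1 w2 (-x)) +
        (leakyReluNet α w1 w2 y - leakyReluNet α w1 w2 (-y)) := by
  simp only [leakyReluNet_sub_neg, Pi.add_apply, mul_add, sum_add_distrib]

end leakyReluNet

/-- g(x₁,x₂) = σ₀(σ₀(x₁) − σ₀(x₂)) − σ₀(σ₀(−x₁) − σ₀(−x₂)) is not linear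
(g(1,0) = 1, g(0,1) = 0, g(1,1) = 0), and no two-layer bias-free leaky ReLU network
equals g: any such network differs from g at some point of ℝ². -/
theorem stmt_4 (g : (Fin 2 → ℝ) → ℝ)
    (hg : ∀ x : Fin 2 → ℝ, g x =
      max (max (x 0) 0 - max (x 1) 0) 0 -
        max (max (-(x 0)) 0 - max (-(x 1)) 0) 0) :
    ¬ IsLinearMap ℝ g ∧
    g ![1, 0] = 1 ∧ g ![0, 1] = 0 ∧ g ![1, 1] = 0 ∧
    ∀ (H : ℕ) (α : ℝ), α ∈ Set.Icc (0 : ℝ) 1 →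
      ∀ (w1 : Fin H → Fin 2 → ℝ) (w2 : Fin H → ℝ),
        ∃ x : Fin 2 → ℝ,
          (∑ h, w2 h * max (∑ i, w1 h i * x i) (α * ∑ i, w1 h i * x i)) ≠ g x := by
  refine ⟨fun hlin => ?_, by norm_num [hg], by norm_num [hg], by norm_num [hg],
    fun H α _ w1 w2 => ?_⟩
  · have hadd := hlin.map_add ![1, 0] ![0, 1]
    norm_num [hg] at hadd
  · by_contra! hnet
    have hadd := leakyReluNet_sub_neg_add α w1 w2 ![1, 0] ![0, 1]
    rw [show leakyReluNet α w1 w2 = g from funext hnet] at hadd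
    norm_num [hg] at hadd
end

section
/- Let {(x_μ, y_μ)}_{μ=1}^P ⊂ ℝ^D × ℝ be a symmetric dataset, let α ∈ [0,1], σ(z) = max(z, αz), and let σ'(z) = 1 for z > 0 and σ'(z) = α for z < 0. Let w ∈ ℝ^D be any vector with wᵀx_μ ≠ 0 for all μ. Then (1/P)·∑_{μ=1}^P σ'(wᵀx_μ)·y_μ·x_μ = ((α+1)/2)·β, and (1/P)·∑_{μ=1}^P y_μ·σ(wᵀx_μ) = ((α+1)/2)·wᵀβ. -/
/-!
Pairing each sample `μ` with its mirror image `π μ` turns every sum into half a sum of pair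
contributions. On a pair the preactivations `wᵀx` have opposite signs, so exactly one of them lies on
each branch of the leaky ReLU: the two slopes add up to `1 + α`, and `σ(z) - σ(-z) = (1 + α) z`.
-/

open Finset Matrix

theorem Equiv.Perm.sum_eq_half_smul_sum_add_comp {ι M : Type*} [Fintype ι] [AddCommGroup M]
    [Module ℝ M] (π : Equiv.Perm ι) (f : ι → M) :
    ∑ i, f i = (1 / 2 : ℝ) • ∑ i, (f i + f (π i)) := by
  rw [sum_add_distrib, Equiv.sum_comp π f, ← two_smul ℝ, smul_smul]
  norm_num

theorem leakyRelu_slope_add_slope_neg (α : ℝ) {z : ℝ} (hz : z ≠ 0) :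
    (if 0 < z then (1 : ℝ) else α) + (if 0 < -z then (1 : ℝ) else α) = α + 1 := by
  rcases hz.lt_or_gt with hneg | hpos
  · rw [if_neg hneg.not_gt, if_pos (neg_pos.mpr hneg)]
  · rw [if_pos hpos, if_neg (neg_neg_of_pos hpos).not_gt, add_comm]

theorem leakyRelu_sub_leakyRelu_neg (α z : ℝ) :
    max z (α * z) - max (-z) (α * -z) = (α + 1) * z := by
  rw [mul_neg, max_neg_neg, sub_neg_eq_add, max_add_min, add_mul, one_mul, add_comm]

theorem stmt_6_general (D P : ℕ) (x : Fin P → Fin D → ℝ) (y : Fin P → ℝ)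
    (hsym : ∃ π : Equiv.Perm (Fin P), ∀ μ, x (π μ) = -x μ ∧ y (π μ) = -y μ)
    (α : ℝ)
    (w : Fin D → ℝ) (hw : ∀ μ, ∑ i, w i * x μ i ≠ 0)
    (β : Fin D → ℝ) (hβ : β = (P : ℝ)⁻¹ • ∑ μ, y μ • x μ) :
    (P : ℝ)⁻¹ • (∑ μ, (if 0 < ∑ i, w i * x μ i then (1 : ℝ) else α) • (y μ • x μ))
        = ((α + 1) / 2) • β ∧
    (P : ℝ)⁻¹ * (∑ μ, y μ * max (∑ i, w i * x μ i) (α * ∑ i, w i * x μ i))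
        = ((α + 1) / 2) * ∑ i, w i * β i := by
  obtain ⟨π, hπ⟩ := hsym
  change ∀ μ, w ⬝ᵥ x μ ≠ 0 at hw
  change (P : ℝ)⁻¹ • (∑ μ, (if 0 < w ⬝ᵥ x μ then (1 : ℝ) else α) • (y μ • x μ)) = _ ∧
    (P : ℝ)⁻¹ * (∑ μ, y μ * max (w ⬝ᵥ x μ) (α * w ⬝ᵥ x μ)) = _ * w ⬝ᵥ β
  have hx (μ) : w ⬝ᵥ x (π μ) = -(w ⬝ᵥ x μ) := by rw [(hπ μ).1, dotProduct_neg]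
  have hyx (μ) : y (π μ) • x (π μ) = y μ • x μ := by rw [(hπ μ).1, (hπ μ).2, neg_smul_neg]
  constructor
  · have hpair (μ) : (if 0 < w ⬝ᵥ x μ then (1 : ℝ) else α) • (y μ • x μ)
        + (if 0 < w ⬝ᵥ x (π μ) then (1 : ℝ) else α) • (y (π μ) • x (π μ))
        = (α + 1) • (y μ • x μ) := by
      rw [hx, hyx, ← add_smul, leakyRelu_slope_add_slope_neg α (hw μ)]
    rw [π.sum_eq_half_smul_sum_add_comp, sum_congr rfl fun μ _ => hpair μ, ← smul_sum, hβ]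
    module
  · have hpair (μ) : y μ * max (w ⬝ᵥ x μ) (α * w ⬝ᵥ x μ)
        + y (π μ) * max (w ⬝ᵥ x (π μ)) (α * w ⬝ᵥ x (π μ))
        = (α + 1) * (w ⬝ᵥ (y μ • x μ)) := by
      rw [hx, (hπ μ).2, neg_mul, ← sub_eq_add_neg, ← mul_sub, leakyRelu_sub_leakyRelu_neg,
        dotProduct_smul, smul_eq_mul]
      ring
    rw [π.sum_eq_half_smul_sum_add_comp, sum_congr rfl fun μ _ => hpair μ, ← mul_sum,
      ← dotProduct_sum, hβ, dotProduct_smul, smul_eq_mul]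
    ring

/-- For a symmetric dataset and any w with wᵀxμ ≠ 0 for all μ,
(1/P)·∑_μ σ'(wᵀxμ)·yμ·xμ = ((α+1)/2)·β and (1/P)·∑_μ yμ·σ(wᵀxμ) = ((α+1)/2)·wᵀβ,
where σ(z) = max(z,αz), σ'(z) = 1 for z > 0 and σ'(z) = α for z < 0, and
β = (1/P)·∑_μ yμ·xμ. -/
theorem stmt_6 (D P : ℕ) (x : Fin P → Fin D → ℝ) (y : Fin P → ℝ)
    (hsym : ∃ π : Equiv.Perm (Fin P), ∀ μ, x (π μ) = -x μ ∧ y (π μ) = -y μ)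
    (α : ℝ) (hα : α ∈ Set.Icc (0 : ℝ) 1)
    (w : Fin D → ℝ) (hw : ∀ μ, ∑ i, w i * x μ i ≠ 0)
    (β : Fin D → ℝ) (hβ : β = (P : ℝ)⁻¹ • ∑ μ, y μ • x μ) :
    (P : ℝ)⁻¹ • (∑ μ, (if 0 < ∑ i, w i * x μ i then (1 : ℝ) else α) • (y μ • x μ))
        = ((α + 1) / 2) • β ∧
    (P : ℝ)⁻¹ * (∑ μ, y μ * max (∑ i, w i * x μ i) (α * ∑ i, w i * x μ i))
        = ((α + 1) / 2) * ∑ i, w i * β i :=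
  stmt_6_general D P x y hsym α w hw β hβ
end

section
/- Let β ∈ ℝ^D be nonzero, s = ‖β‖, β̄ = β/s, α ∈ [0,1], τ > 0, and M = [[0, β],[βᵀ, 0]] ∈ ℝ^{(D+1)×(D+1)} (zero D×D block, β as last column, βᵀ as last row). Given initial matrices W₁(0) ∈ ℝ^{H×D}, W₂(0) ∈ ℝ^{1×H}, the function W̃ : ℝ → ℝ^{(D+1)×H} defined by W̃(t) = (1/2)·e^{((α+1)s/(2τ))t}·[β̄;1]·(β̄ᵀW₁(0)ᵀ + W₂(0)) + (1/2)·e^{−((α+1)s/(2τ))t}·[β̄;−1]·(β̄ᵀW₁(0)ᵀ − W₂(0)) + [(I − β̄β̄ᵀ)W₁(0)ᵀ; 0] satisfies the linear ODE τ·(d/dt)W̃(t) = ((α+1)/2)·M·W̃(t) for all t, with initial value W̃(0) = [W₁(0)ᵀ; W₂(0)]. -/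
/-!
The vectors `[β̄; 1]` and `[β̄; -1]` are eigenvectors of `M = [[0, β], [βᵀ, 0]]` with eigenvalues
`s` and `-s`, and `[(I - β̄β̄ᵀ)w; 0]` lies in its kernel because `β ⟂ (I - β̄β̄ᵀ)w`. Each column of
`W̃(t)` is `e^{ct} p + e^{-ct} q + r` with `p`, `q`, `r` of these three kinds and `c = (α+1)s/(2τ)`,
so differentiating reproduces `τ⁻¹ (α+1)/2 · M W̃(t)`.
-/

open Matrix Real

section Normalization

variable {ι : Type*} [Fintype ι] (β : ι → ℝ)

theorem sqrt_sum_sq_smul_inv_smul :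
    √(∑ i, β i ^ 2) • (√(∑ i, β i ^ 2))⁻¹ • β = β := by
  rcases eq_or_ne (√(∑ i, β i ^ 2)) 0 with hs | hs
  · have hsum : ∑ i, β i ^ 2 = 0 := (Real.sqrt_eq_zero (by positivity)).1 hs
    have hβ : β = 0 := funext fun i => by
      simpa using (Finset.sum_eq_zero_iff_of_nonneg fun j _ => sq_nonneg (β j)).1 hsum i
    simp [hβ]
  · exact smul_inv_smul₀ hs β

theorem dotProduct_inv_sqrt_sum_sq_smul :
    β ⬝ᵥ ((√(∑ i, β i ^ 2))⁻¹ • β) = √(∑ i, β i ^ 2) := by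
  have hsq : β ⬝ᵥ β = √(∑ i, β i ^ 2) * √(∑ i, β i ^ 2) := by
    rw [Real.mul_self_sqrt (by positivity)]
    simp [dotProduct, sq]
  rw [dotProduct_smul, hsq, smul_eq_mul, ← mul_assoc, inv_mul_mul_self]

end Normalization

/-- The symmetric matrix `[[0, β], [βᵀ, 0]]`. -/
def borderMatrix {D : ℕ} (β : Fin D → ℝ) : Matrix (Fin (D + 1)) (Fin (D + 1)) ℝ :=
  Matrix.of fun i k =>
    if hi : (i : ℕ) < D then (if (k : ℕ) = D then β ⟨i, hi⟩ else 0)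
    else (if hk : (k : ℕ) < D then β ⟨k, hk⟩ else 0)

section BorderMatrix

variable {D : ℕ} {β bb : Fin D → ℝ} {s : ℝ}

theorem borderMatrix_mulVec_snoc (x : Fin D → ℝ) (y : ℝ) :
    borderMatrix β *ᵥ Fin.snoc x y = Fin.snoc (y • β) (β ⬝ᵥ x) := by
  ext i
  induction i using Fin.lastCases with
  | last => simp [borderMatrix, mulVec, dotProduct, Fin.sum_univ_castSucc]
  | cast j =>
    have hval : ∀ k : Fin D, (k : ℕ) ≠ D := fun k => k.is_lt.ne
    simp [borderMatrix, mulVec, dotProduct, Fin.sum_univ_castSucc, hval, mul_comm]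

theorem borderMatrix_mulVec_snoc_of_sq_eq_one (hsbb : s • bb = β) (hβbb : β ⬝ᵥ bb = s)
    {ε : ℝ} (hε : ε ^ 2 = 1) :
    borderMatrix β *ᵥ Fin.snoc bb ε = (ε * s) • Fin.snoc bb ε := by
  rw [borderMatrix_mulVec_snoc, hβbb]
  ext i
  induction i using Fin.lastCases with
  | last =>
    simp only [Fin.snoc_last, Pi.smul_apply, smul_eq_mul]
    linear_combination (-s) * hε
  | cast j => simp [← hsbb, mul_assoc]

theorem borderMatrix_mulVec_snoc_sub_zero (hsbb : s • bb = β) (hβbb : β ⬝ᵥ bb = s)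
    (x : Fin D → ℝ) :
    borderMatrix β *ᵥ Fin.snoc (x - (bb ⬝ᵥ x) • bb) 0 = 0 := by
  have hβx : β ⬝ᵥ x = s * (bb ⬝ᵥ x) := by rw [← hsbb, smul_dotProduct, smul_eq_mul]
  rw [borderMatrix_mulVec_snoc, dotProduct_sub, dotProduct_smul, hβbb, hβx, zero_smul,
    smul_eq_mul, mul_comm, sub_self]
  ext i
  induction i using Fin.lastCases <;> simp

end BorderMatrix

theorem hasDerivAt_exp_smul_add_exp_neg_smul_add {n : Type*} [Fintype n]
    {A : Matrix n n ℝ} {p q r : n → ℝ} {κ μ c : ℝ} (hc : c = κ * μ)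
    (hp : A *ᵥ p = μ • p) (hq : A *ᵥ q = -μ • q) (hr : A *ᵥ r = 0) (t : ℝ) :
    HasDerivAt (fun u => exp (c * u) • p + exp (-(c * u)) • q + r)
      (κ • A *ᵥ (exp (c * t) • p + exp (-(c * t)) • q + r)) t := by
  have hexp : HasDerivAt (fun u => exp (c * u)) (exp (c * t) * c) t :=
    ((hasDerivAt_id t).const_mul c).exp.congr_deriv (by simp)
  have hexp_neg : HasDerivAt (fun u => exp (-(c * u))) (exp (-(c * t)) * -c) t :=
    ((hasDerivAt_id t).const_mul c).neg.exp.congr_deriv (by simp)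
  refine (((hexp.smul_const p).add (hexp_neg.smul_const q)).add_const r).congr_deriv ?_
  simp only [mulVec_add, mulVec_smul, hp, hq, hr, hc]
  module

theorem stmt_9_general (D H : ℕ) (β : Fin D → ℝ)
    (α τ : ℝ)
    (s : ℝ) (hs : s = Real.sqrt (∑ i, β i ^ 2))
    (bb : Fin D → ℝ) (hbb : bb = s⁻¹ • β)
    (M : Matrix (Fin (D + 1)) (Fin (D + 1)) ℝ)
    (hM : ∀ i k, M i k =
      if hi : (i : ℕ) < D then (if (k : ℕ) = D then β ⟨i, hi⟩ else 0)
      else (if hk : (k : ℕ) < D then β ⟨k, hk⟩ else 0))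
    (W10 : Matrix (Fin H) (Fin D) ℝ) (W20 : Fin H → ℝ)
    (Wt : ℝ → Matrix (Fin (D + 1)) (Fin H) ℝ)
    (hWt : ∀ t i h, Wt t i h =
      (1 / 2) * Real.exp (((α + 1) * s / (2 * τ)) * t) * (Fin.snoc bb 1 : Fin (D + 1) → ℝ) i *
        ((∑ j, bb j * W10 h j) + W20 h)
      + (1 / 2) * Real.exp (-(((α + 1) * s / (2 * τ)) * t)) * (Fin.snoc bb (-1) : Fin (D + 1) → ℝ) i *
        ((∑ j, bb j * W10 h j) - W20 h)
      + (Fin.snoc (fun i' : Fin D => fun h' : Fin H =>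
          W10 h' i' - bb i' * ∑ j, bb j * W10 h' j) (fun _ => (0 : ℝ)) :
            Fin (D + 1) → Fin H → ℝ) i h) :
    (∀ t i h, HasDerivAt (fun u => Wt u i h)
      (τ⁻¹ * (((α + 1) / 2) * ∑ k, M i k * Wt t k h)) t) ∧
    (∀ i h, Wt 0 i h =
      (Fin.snoc (fun i' : Fin D => fun h' : Fin H => W10 h' i')
        (fun h' => W20 h') : Fin (D + 1) → Fin H → ℝ) i h) := by
  have hsbb : s • bb = β := by rw [hbb, hs]; exact sqrt_sum_sq_smul_inv_smul β
  have hβbb : β ⬝ᵥ bb = s := by rw [hbb, hs]; exact dotProduct_inv_sqrt_sum_sq_smul β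
  obtain rfl : M = borderMatrix β := Matrix.ext hM
  refine ⟨fun t i h => ?_, fun i h => ?_⟩
  · set c := (α + 1) * s / (2 * τ) with hc
    set S := bb ⬝ᵥ W10 h
    have hWt_col : ∀ u k, Wt u k h = (exp (c * u) • (((S + W20 h) / 2) • Fin.snoc bb 1)
        + exp (-(c * u)) • (((S - W20 h) / 2) • Fin.snoc bb (-1))
        + Fin.snoc (W10 h - S • bb) 0 : Fin (D + 1) → ℝ) k := by
      intro u k
      induction k using Fin.lastCases <;>
        simp only [hWt, Fin.snoc_last, Fin.snoc_castSucc, dotProduct, S, Pi.add_apply,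
          Pi.sub_apply, Pi.smul_apply, smul_eq_mul] <;> ring
    have hp : borderMatrix β *ᵥ (((S + W20 h) / 2) • Fin.snoc bb 1)
        = s • (((S + W20 h) / 2) • Fin.snoc bb 1) := by
      rw [mulVec_smul, borderMatrix_mulVec_snoc_of_sq_eq_one hsbb hβbb (by norm_num), one_mul,
        smul_comm]
    have hq : borderMatrix β *ᵥ (((S - W20 h) / 2) • Fin.snoc bb (-1))
        = -s • (((S - W20 h) / 2) • Fin.snoc bb (-1)) := by
      rw [mulVec_smul, borderMatrix_mulVec_snoc_of_sq_eq_one hsbb hβbb (by norm_num), neg_one_mul,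
        smul_comm]
    have key := hasDerivAt_exp_smul_add_exp_neg_smul_add (κ := τ⁻¹ * ((α + 1) / 2)) (c := c)
      (by rw [hc]; ring) hp hq (borderMatrix_mulVec_snoc_sub_zero hsbb hβbb (W10 h)) t
    simp only [hWt_col]
    exact (hasDerivAt_pi.1 key i).congr_deriv (mul_assoc _ _ _)
  · induction i using Fin.lastCases <;>
      simp only [hWt, mul_zero, exp_zero, neg_zero, Fin.snoc_last, Fin.snoc_castSucc] <;> ring

/-- the explicit function W̃(t) solves the linearized early-phase ODE
τ·(d/dt)W̃ = ((α+1)/2)·M·W̃ with M = [[0, β],[βᵀ, 0]], and has initial value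
W̃(0) = [W₁(0)ᵀ; W₂(0)]. -/
theorem stmt_9 (D H : ℕ) (β : Fin D → ℝ) (hβ : β ≠ 0)
    (α τ : ℝ) (hα : α ∈ Set.Icc (0 : ℝ) 1) (hτ : 0 < τ)
    (s : ℝ) (hs : s = Real.sqrt (∑ i, β i ^ 2))
    (bb : Fin D → ℝ) (hbb : bb = s⁻¹ • β)
    (M : Matrix (Fin (D + 1)) (Fin (D + 1)) ℝ)
    (hM : ∀ i k, M i k =
      if hi : (i : ℕ) < D then (if (k : ℕ) = D then β ⟨i, hi⟩ else 0)
      else (if hk : (k : ℕ) < D then β ⟨k, hk⟩ else 0))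
    (W10 : Matrix (Fin H) (Fin D) ℝ) (W20 : Fin H → ℝ)
    (Wt : ℝ → Matrix (Fin (D + 1)) (Fin H) ℝ)
    (hWt : ∀ t i h, Wt t i h =
      (1 / 2) * Real.exp (((α + 1) * s / (2 * τ)) * t) * (Fin.snoc bb 1 : Fin (D + 1) → ℝ) i *
        ((∑ j, bb j * W10 h j) + W20 h)
      + (1 / 2) * Real.exp (-(((α + 1) * s / (2 * τ)) * t)) * (Fin.snoc bb (-1) : Fin (D + 1) → ℝ) i *
        ((∑ j, bb j * W10 h j) - W20 h)
      + (Fin.snoc (fun i' : Fin D => fun h' : Fin H =>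
          W10 h' i' - bb i' * ∑ j, bb j * W10 h' j) (fun _ => (0 : ℝ)) :
            Fin (D + 1) → Fin H → ℝ) i h) :
    (∀ t i h, HasDerivAt (fun u => Wt u i h)
      (τ⁻¹ * (((α + 1) / 2) * ∑ k, M i k * Wt t k h)) t) ∧
    (∀ i h, Wt 0 i h =
      (Fin.snoc (fun i' : Fin D => fun h' : Fin H => W10 h' i')
        (fun h' => W20 h') : Fin (D + 1) → Fin H → ℝ) i h) :=
  stmt_9_general D H β α τ s hs bb hbb M hM W10 W20 Wt hWt
end

section
/- Let α ∈ [0,1], σ(z) = max(z, αz), W₂ ∈ ℝ^{1×H} with entries w_{2h}, and r ∈ ℝ^D. Suppose W₁ = W₂ᵀrᵀ ∈ ℝ^{H×D} (so the h-th row of W₁ is w_{2h}·rᵀ), and suppose the positive and negative parts of W₂ have equal norms: ∑_{h: w_{2h}>0} w_{2h}² = ∑_{h: w_{2h}<0} w_{2h}². Then for every x ∈ ℝ^D: W₂·σ(W₁x) = ((α+1)/2)·‖W₂‖²·(rᵀx) = ((α+1)/2)·W₂W₁x. -/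
/-! Writing `max z (α z) = ((1 + α) z + |1 - α| |z|) / 2`, the leaky ReLU is a linear part plus a
multiple of `|z|`. With rank-one weights the preactivation of unit `h` is `w h * s` with
`s = rᵀx`, so the `|·|`-part of the network output is a multiple of `∑ h, w h * |w h|`, which is
the difference of the squared norms of the positive and negative parts of `w`, hence zero. -/

open Finset

theorem max_mul_self_eq (α z : ℝ) :
    max z (α * z) = (1 + α) / 2 * z + |1 - α| / 2 * |z| := by
  rw [sup_eq_half_smul_add_add_abs_sub' ℝ, smul_eq_mul,
    show α * z - z = (α - 1) * z by ring, abs_mul, abs_sub_comm]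
  ring

theorem sum_mul_abs_eq_zero_of_balanced {ι : Type*} [Fintype ι] (w : ι → ℝ)
    (hbal : ∑ h ∈ univ.filter (fun h => 0 < w h), w h ^ 2
      = ∑ h ∈ univ.filter (fun h => w h < 0), w h ^ 2) :
    ∑ h, w h * |w h| = 0 := by
  have hsplit : ∀ h, w h * |w h|
      = (if 0 < w h then w h ^ 2 else 0) - (if w h < 0 then w h ^ 2 else 0) := by
    intro h
    rcases lt_trichotomy (w h) 0 with hneg | hzero | hpos
    · simp [abs_of_neg hneg, hneg, hneg.not_gt]
      ring
    · simp [hzero]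
    · simp [abs_of_pos hpos, hpos, hpos.not_gt, sq]
  simp only [hsplit, sum_sub_distrib, ← sum_filter, hbal, sub_self]

theorem sum_mul_max_mul_self_of_balanced {ι : Type*} [Fintype ι] (α s : ℝ) (w : ι → ℝ)
    (hw : ∑ h, w h * |w h| = 0) :
    ∑ h, w h * max (w h * s) (α * (w h * s)) = (α + 1) / 2 * (∑ h, w h ^ 2) * s := by
  have hterm : ∀ h, w h * max (w h * s) (α * (w h * s))
      = (α + 1) / 2 * s * w h ^ 2 + |1 - α| / 2 * |s| * (w h * |w h|) := by
    intro h
    rw [max_mul_self_eq, abs_mul]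
    ring
  simp only [hterm, sum_add_distrib, ← mul_sum, hw]
  ring

theorem stmt_11_general (D H : ℕ) (α : ℝ)
    (W2 : Fin H → ℝ) (r : Fin D → ℝ)
    (W1 : Fin H → Fin D → ℝ) (hW1 : ∀ h i, W1 h i = W2 h * r i)
    (hbal : ∑ h ∈ Finset.filter (fun h => 0 < W2 h) Finset.univ, W2 h ^ 2
          = ∑ h ∈ Finset.filter (fun h => W2 h < 0) Finset.univ, W2 h ^ 2) :
    ∀ x : Fin D → ℝ,
      (∑ h, W2 h * max (∑ i, W1 h i * x i) (α * ∑ i, W1 h i * x i))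
        = ((α + 1) / 2) * (∑ h, W2 h ^ 2) * ∑ i, r i * x i ∧
      (∑ h, W2 h * max (∑ i, W1 h i * x i) (α * ∑ i, W1 h i * x i))
        = ((α + 1) / 2) * ∑ h, W2 h * ∑ i, W1 h i * x i := by
  intro x
  have hpre : ∀ h, ∑ i, W1 h i * x i = W2 h * ∑ i, r i * x i := fun h => by
    simp only [hW1, mul_sum, mul_assoc]
  have hout := sum_mul_max_mul_self_of_balanced α (∑ i, r i * x i) W2
    (sum_mul_abs_eq_zero_of_balanced W2 hbal)
  simp only [hpre, hout, true_and]
  simp only [← mul_assoc, ← sq, ← sum_mul]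

/-- a two-layer bias-free leaky ReLU network with balanced rank-one
weights W₁ = W₂ᵀrᵀ (and equal norms of the positive and negative parts of W₂)
implements the linear map x ↦ ((α+1)/2)·‖W₂‖²·(rᵀx) = ((α+1)/2)·W₂W₁x. -/
theorem stmt_11 (D H : ℕ) (α : ℝ) (hα : α ∈ Set.Icc (0 : ℝ) 1)
    (W2 : Fin H → ℝ) (r : Fin D → ℝ)
    (W1 : Fin H → Fin D → ℝ) (hW1 : ∀ h i, W1 h i = W2 h * r i)
    (hbal : ∑ h ∈ Finset.filter (fun h => 0 < W2 h) Finset.univ, W2 h ^ 2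
          = ∑ h ∈ Finset.filter (fun h => W2 h < 0) Finset.univ, W2 h ^ 2) :
    ∀ x : Fin D → ℝ,
      (∑ h, W2 h * max (∑ i, W1 h i * x i) (α * ∑ i, W1 h i * x i))
        = ((α + 1) / 2) * (∑ h, W2 h ^ 2) * ∑ i, r i * x i ∧
      (∑ h, W2 h * max (∑ i, W1 h i * x i) (α * ∑ i, W1 h i * x i))
        = ((α + 1) / 2) * ∑ h, W2 h * ∑ i, W1 h i * x i :=
  stmt_11_general D H α W2 r W1 hW1 hbal
end

section
/- Let {(x_μ, y_μ)}_{μ=1}^P be a symmetric dataset with Σ = (1/P)∑_μ x_μ x_μᵀ. Let α ∈ [0,1], σ(z) = max(z, αz), σ'(z) = 1 for z > 0 and σ'(z) = α for z < 0. Let W₂ ∈ ℝ^{1×H}, r ∈ ℝ^D with rᵀx_μ ≠ 0 for all μ, and W₁ = W₂ᵀrᵀ, and assume ∑_{h: w_{2h}>0} w_{2h}² = ∑_{h: w_{2h}<0} w_{2h}². Then: (1) (1/P)·∑_μ σ'(W₁x_μ) ⊙ (W₂ᵀW₂W₁x_μ)·x_μᵀ = ((α+1)/2)·W₂ᵀW₂W₁Σ;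 and (2) (1/P)·∑_μ x_μ·σ(W₁x_μ)ᵀ = ((α+1)/2)·Σ·W₁ᵀ. -/
/-! Pairing each sample with its mirror image and using σ(z) − σ(−z) = (1 + α) z turns the average
of x σ(Wx)ᵀ into (1 + α)/2 times the linear average Σ Wᵀ, for any W. For rank-one W₁ = W₂ᵀrᵀ one has
W₂ᵀW₂W₁ = ‖W₂‖² W₁, so σ'(W₁x) ⊙ W₂ᵀW₂W₁x = ‖W₂‖² σ(W₁x), and the first identity is ‖W₂‖² times
the transpose of the second. -/

open Matrix

def leakyReLU (α z : ℝ) : ℝ := max z (α * z)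

lemma leakyReLU_sub_leakyReLU_neg {α : ℝ} (hα : α ≤ 1) (z : ℝ) :
    leakyReLU α z - leakyReLU α (-z) = (1 + α) * z := by
  unfold leakyReLU
  rcases le_or_gt 0 z with hz | hz
  · rw [max_eq_left (by nlinarith), max_eq_right (by nlinarith)]; ring
  · rw [max_eq_right (by nlinarith), max_eq_left (by nlinarith)]; ring

lemma ite_pos_mul_self_eq_leakyReLU {α : ℝ} (hα : α ≤ 1) (z : ℝ) :
    (if 0 < z then 1 else α) * z = leakyReLU α z := by
  unfold leakyReLU
  split_ifs with hz
  · rw [one_mul, max_eq_left (by nlinarith)]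
  · rw [max_eq_right (by nlinarith)]

lemma Equiv.Perm.sum_eq_half_sum_add_comp {ι K M : Type*} [Fintype ι] [DivisionRing K]
    [CharZero K] [AddCommGroup M] [Module K M] (π : Equiv.Perm ι) (f : ι → M) :
    ∑ μ, f μ = (2 : K)⁻¹ • ∑ μ, (f μ + f (π μ)) := by
  rw [Finset.sum_add_distrib, Equiv.sum_comp, ← two_smul K, inv_smul_smul₀ two_ne_zero]

section SymmetricData

variable {ι m n : Type*} [Fintype ι] [Fintype n] {x : ι → n → ℝ} {π : Equiv.Perm ι}

lemma sum_vecMulVec_leakyReLU_mulVec (hx : ∀ μ, x (π μ) = -x μ) {α : ℝ} (hα : α ≤ 1)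
    (W : Matrix m n ℝ) :
    ∑ μ, vecMulVec (x μ) (leakyReLU α ∘ (W *ᵥ x μ))
      = ((α + 1) / 2) • ∑ μ, vecMulVec (x μ) (W *ᵥ x μ) := by
  rw [π.sum_eq_half_sum_add_comp (K := ℝ), Finset.smul_sum, Finset.smul_sum]
  refine Finset.sum_congr rfl fun μ _ => ?_
  ext i h
  simp only [hx, mulVec_neg, Matrix.smul_apply, Matrix.add_apply, vecMulVec_apply, Pi.neg_apply,
    Function.comp_apply, smul_eq_mul]
  linear_combination (2⁻¹ * x μ i) * leakyReLU_sub_leakyReLU_neg hα ((W *ᵥ x μ) h)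

lemma sum_vecMulVec_self_mul_transpose (W : Matrix m n ℝ) :
    (∑ μ, vecMulVec (x μ) (x μ)) * Wᵀ = ∑ μ, vecMulVec (x μ) (W *ᵥ x μ) := by
  simp only [Matrix.sum_mul, vecMulVec_mul, vecMul_transpose]

end SymmetricData

lemma transpose_mul_self_mul_eq_dotProduct_smul {m n : Type*} [Fintype m] [Fintype n]
    {W2 : Matrix (Fin 1) m ℝ} {r : n → ℝ} {W1 : Matrix m n ℝ}
    (hW1 : ∀ h i, W1 h i = W2 0 h * r i) :
    W2ᵀ * W2 * W1 = (W2 0 ⬝ᵥ W2 0) • W1 := by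
  ext h i
  simp only [mul_apply, transpose_apply, Fin.sum_univ_one, hW1, Matrix.smul_apply, smul_eq_mul,
    dotProduct]
  rw [Finset.sum_mul]
  exact Finset.sum_congr rfl fun k _ => by ring

theorem stmt_12_general (D P H : ℕ) (x : Fin P → Fin D → ℝ) (y : Fin P → ℝ)
    (hsym : ∃ π : Equiv.Perm (Fin P), ∀ μ, x (π μ) = -x μ ∧ y (π μ) = -y μ)
    (α : ℝ) (hα : α ∈ Set.Icc (0 : ℝ) 1)
    (W2 : Matrix (Fin 1) (Fin H) ℝ) (r : Fin D → ℝ)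
    (W1 : Matrix (Fin H) (Fin D) ℝ) (hW1 : ∀ h i, W1 h i = W2 0 h * r i)
    (Sig : Matrix (Fin D) (Fin D) ℝ)
    (hSig : Sig = (P : ℝ)⁻¹ • ∑ μ, Matrix.of fun i j => x μ i * x μ j) :
    ((P : ℝ)⁻¹ • ∑ μ, Matrix.of fun h j =>
        (if 0 < (W1 *ᵥ x μ) h then (1 : ℝ) else α) *
          (((W2ᵀ * W2) *ᵥ (W1 *ᵥ x μ)) h) * x μ j)
      = ((α + 1) / 2) • (W2ᵀ * W2 * W1 * Sig) ∧
    ((P : ℝ)⁻¹ • ∑ μ, Matrix.of fun i h =>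
        x μ i * max ((W1 *ᵥ x μ) h) (α * (W1 *ᵥ x μ) h))
      = ((α + 1) / 2) • (Sig * W1ᵀ) := by
  obtain ⟨π, hπ⟩ := hsym
  replace hSig : Sig = (P : ℝ)⁻¹ • ∑ μ, vecMulVec (x μ) (x μ) := hSig
  have hSig_symm : Sigᵀ = Sig := by
    simp only [hSig, transpose_smul, transpose_sum, transpose_vecMulVec]
  have hrankOne := transpose_mul_self_mul_eq_dotProduct_smul hW1
  have hsecond : (P : ℝ)⁻¹ • ∑ μ, vecMulVec (x μ) (leakyReLU α ∘ (W1 *ᵥ x μ))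
      = ((α + 1) / 2) • (Sig * W1ᵀ) := by
    rw [sum_vecMulVec_leakyReLU_mulVec (fun μ => (hπ μ).1) hα.2, hSig, Matrix.smul_mul,
      sum_vecMulVec_self_mul_transpose, smul_comm]
  have hfirst_summand : ∀ μ, (Matrix.of fun h j => (if 0 < (W1 *ᵥ x μ) h then (1 : ℝ) else α) *
          (((W2ᵀ * W2) *ᵥ (W1 *ᵥ x μ)) h) * x μ j)
      = (W2 0 ⬝ᵥ W2 0) • (vecMulVec (x μ) (leakyReLU α ∘ (W1 *ᵥ x μ)))ᵀ := by
    intro μ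
    ext h j
    rw [mulVec_mulVec, hrankOne, smul_mulVec, transpose_vecMulVec, Matrix.smul_apply, of_apply,
      Pi.smul_apply, vecMulVec_apply, Function.comp_apply, ← ite_pos_mul_self_eq_leakyReLU hα.2]
    simp only [smul_eq_mul]
    ring
  refine ⟨?_, hsecond⟩
  simp only [hfirst_summand, ← Finset.smul_sum, ← transpose_sum]
  rw [smul_comm, ← transpose_smul, hsecond, transpose_smul, transpose_mul, hSig_symm,
    transpose_transpose, hrankOne, Matrix.smul_mul, smul_comm]

/-- on a symmetric dataset, with balanced rank-one weights W₁ = W₂ᵀrᵀ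
(rᵀxμ ≠ 0 for all μ), the two key averages in the gradient flow reduce to linear-network
quantities: (1) (1/P)∑_μ σ'(W₁xμ) ⊙ (W₂ᵀW₂W₁xμ)xμᵀ = ((α+1)/2)·W₂ᵀW₂W₁Σ and
(2) (1/P)∑_μ xμσ(W₁xμ)ᵀ = ((α+1)/2)·ΣW₁ᵀ. -/
theorem stmt_12 (D P H : ℕ) (x : Fin P → Fin D → ℝ) (y : Fin P → ℝ)
    (hsym : ∃ π : Equiv.Perm (Fin P), ∀ μ, x (π μ) = -x μ ∧ y (π μ) = -y μ)
    (α : ℝ) (hα : α ∈ Set.Icc (0 : ℝ) 1)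
    (W2 : Matrix (Fin 1) (Fin H) ℝ) (r : Fin D → ℝ)
    (hr : ∀ μ, ∑ i, r i * x μ i ≠ 0)
    (W1 : Matrix (Fin H) (Fin D) ℝ) (hW1 : ∀ h i, W1 h i = W2 0 h * r i)
    (hbal : ∑ h ∈ Finset.filter (fun h => 0 < W2 0 h) Finset.univ, W2 0 h ^ 2
          = ∑ h ∈ Finset.filter (fun h => W2 0 h < 0) Finset.univ, W2 0 h ^ 2)
    (Sig : Matrix (Fin D) (Fin D) ℝ)
    (hSig : Sig = (P : ℝ)⁻¹ • ∑ μ, Matrix.of fun i j => x μ i * x μ j) :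
    ((P : ℝ)⁻¹ • ∑ μ, Matrix.of fun h j =>
        (if 0 < (W1 *ᵥ x μ) h then (1 : ℝ) else α) *
          (((W2ᵀ * W2) *ᵥ (W1 *ᵥ x μ)) h) * x μ j)
      = ((α + 1) / 2) • (W2ᵀ * W2 * W1 * Sig) ∧
    ((P : ℝ)⁻¹ • ∑ μ, Matrix.of fun i h =>
        x μ i * max ((W1 *ᵥ x μ) h) (α * (W1 *ᵥ x μ) h))
      = ((α + 1) / 2) • (Sig * W1ᵀ) :=
  stmt_12_general D P H x y hsym α hα W2 r W1 hW1 Sig hSig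
end

section
/- Fix α ∈ [0,1], τ > 0, Σ ∈ ℝ^{D×D}, β ∈ ℝ^D. Suppose W₁ˡⁱⁿ : ℝ → ℝ^{H×D} and W₂ˡⁱⁿ : ℝ → ℝ^{1×H} are differentiable and satisfy the two-layer linear-network gradient flow τ·Ẇ₁ˡⁱⁿ = (W₂ˡⁱⁿ)ᵀ(βᵀ − W₂ˡⁱⁿW₁ˡⁱⁿΣ) and τ·Ẇ₂ˡⁱⁿ = (βᵀ − W₂ˡⁱⁿW₁ˡⁱⁿΣ)(W₁ˡⁱⁿ)ᵀ. Define W₁(t) = √(2/(α+1))·W₁ˡⁱⁿ(((α+1)/2)·t) and W₂(t) = √(2/(α+1))·W₂ˡⁱⁿ(((α+1)/2)·t). Then (W₁, W₂) satisfies the reduced leaky-ReLU dynamics τ·Ẇ₁ = ((α+1)/2)·W₂ᵀβᵀ − ((α+1)/2)²·W₂ᵀW₂W₁Σ and τ·Ẇ₂ = ((α+1)/2)·βᵀW₁ᵀ − ((α+1)/2)²·W₂W₁ΣW₁ᵀ, and the implemented linear maps agree: ((α+1)/2)·W₂(t)W₁(t) = W₂ˡⁱⁿ(((α+1)/2)t)·W₁ˡⁱⁿ(((α+1)/2)t)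 for all t. -/
/-!
Substituting `W = s • Wˡⁱⁿ(c ·)` with `c = (α+1)/2` and `s = √(2/(α+1))` multiplies the
left-hand side of each linear-network flow equation by the chain-rule factor `s c`. On the
right-hand side of the leaky-ReLU dynamics, the term linear in the weights carries the factor
`c s` and the cubic term the factor `c² s³`, which equals `s c` because `c s² = 1`. The same
identity `c s² = 1` makes the implemented maps agree.
-/

open Matrix

theorem HasDerivAt.const_mul_comp_const_mul {𝕜 : Type*} [NontriviallyNormedField 𝕜]
    {f : 𝕜 → 𝕜} {f' c t : 𝕜} (s : 𝕜) (hf : HasDerivAt f f' (c * t)) :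
    HasDerivAt (fun u => s * f (c * u)) (s * c * f') t := by
  have := (hf.comp t ((hasDerivAt_id t).const_mul c)).const_mul s
  simpa [mul_comm, mul_left_comm] using this

theorem half_mul_sqrt_two_div_mul_self {a : ℝ} (ha : 0 < a) :
    a / 2 * (√(2 / a) * √(2 / a)) = 1 := by
  rw [Real.mul_self_sqrt (by positivity)]
  field_simp

section Rescaling

variable {R m n p : Type*} [CommRing R] {c s : R}

theorem leakyFlow_fst_rescale [Fintype m] [Fintype n] [Fintype p] (hcs : c * (s * s) = 1)
    (B : Matrix m p R) (S : Matrix p p R) (V₁ : Matrix n p R) (V₂ : Matrix m n R) :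
    c • ((s • V₂)ᵀ * B) - c ^ 2 • ((s • V₂)ᵀ * (s • V₂) * (s • V₁) * S)
      = (s * c) • (V₂ᵀ * (B - V₂ * V₁ * S)) := by
  have hcube : c ^ 2 * (s * (s * s)) = s * c := by linear_combination (s * c) * hcs
  simp only [transpose_smul, Matrix.smul_mul, Matrix.mul_smul, smul_smul, Matrix.mul_sub,
    smul_sub]
  rw [hcube, mul_comm c s]
  simp only [Matrix.mul_assoc]

theorem leakyFlow_snd_rescale [Fintype n] [Fintype p] (hcs : c * (s * s) = 1)
    (B : Matrix m p R) (S : Matrix p p R) (V₁ : Matrix n p R) (V₂ : Matrix m n R) :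
    c • (B * (s • V₁)ᵀ) - c ^ 2 • ((s • V₂) * (s • V₁) * S * (s • V₁)ᵀ)
      = (s * c) • ((B - V₂ * V₁ * S) * V₁ᵀ) := by
  have hcube : c ^ 2 * (s * (s * s)) = s * c := by linear_combination (s * c) * hcs
  simp only [transpose_smul, Matrix.smul_mul, Matrix.mul_smul, smul_smul, Matrix.sub_mul,
    smul_sub]
  rw [hcube, mul_comm c s]

theorem smul_mul_eq_of_mul_mul_self_eq_one [Fintype n] (hcs : c * (s * s) = 1)
    (V₁ : Matrix n p R) (V₂ : Matrix m n R) :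
    c • ((s • V₂) * (s • V₁)) = V₂ * V₁ := by
  rw [Matrix.smul_mul, Matrix.mul_smul, smul_smul, smul_smul, mul_assoc, hcs, one_smul]

end Rescaling

theorem stmt_13_general (D H : ℕ) (α τ : ℝ) (hα : α ∈ Set.Icc (0 : ℝ) 1)
    (Sig : Matrix (Fin D) (Fin D) ℝ)
    (Brow : Matrix (Fin 1) (Fin D) ℝ)
    (W1lin : ℝ → Matrix (Fin H) (Fin D) ℝ) (W2lin : ℝ → Matrix (Fin 1) (Fin H) ℝ)
    (hW1lin : ∀ t h j, HasDerivAt (fun u => W1lin u h j)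
      (τ⁻¹ * (((W2lin t)ᵀ * (Brow - W2lin t * W1lin t * Sig)) h j)) t)
    (hW2lin : ∀ t h, HasDerivAt (fun u => W2lin u 0 h)
      (τ⁻¹ * (((Brow - W2lin t * W1lin t * Sig) * (W1lin t)ᵀ) 0 h)) t)
    (W1 : ℝ → Matrix (Fin H) (Fin D) ℝ) (W2 : ℝ → Matrix (Fin 1) (Fin H) ℝ)
    (hW1 : ∀ t, W1 t = Real.sqrt (2 / (α + 1)) • W1lin (((α + 1) / 2) * t))
    (hW2 : ∀ t, W2 t = Real.sqrt (2 / (α + 1)) • W2lin (((α + 1) / 2) * t)) :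
    (∀ t h j, HasDerivAt (fun u => W1 u h j)
      (τ⁻¹ * (((((α + 1) / 2) • ((W2 t)ᵀ * Brow)
        - (((α + 1) / 2) ^ 2) • ((W2 t)ᵀ * W2 t * W1 t * Sig) :
          Matrix (Fin H) (Fin D) ℝ)) h j)) t) ∧
    (∀ t h, HasDerivAt (fun u => W2 u 0 h)
      (τ⁻¹ * (((((α + 1) / 2) • (Brow * (W1 t)ᵀ)
        - (((α + 1) / 2) ^ 2) • (W2 t * W1 t * Sig * (W1 t)ᵀ) :
          Matrix (Fin 1) (Fin H) ℝ)) 0 h)) t) ∧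
    (∀ t, ((α + 1) / 2) • (W2 t * W1 t)
      = W2lin (((α + 1) / 2) * t) * W1lin (((α + 1) / 2) * t)) := by
  set c := (α + 1) / 2
  set s := √(2 / (α + 1))
  have hcs : c * (s * s) = 1 := half_mul_sqrt_two_div_mul_self (by linarith [hα.1])
  obtain rfl : W1 = fun t => s • W1lin (c * t) := funext hW1
  obtain rfl : W2 = fun t => s • W2lin (c * t) := funext hW2
  refine ⟨fun t h j => ?_, fun t h => ?_, fun t => smul_mul_eq_of_mul_mul_self_eq_one hcs _ _⟩
  · refine ((hW1lin (c * t) h j).const_mul_comp_const_mul s).congr_deriv ?_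
    rw [leakyFlow_fst_rescale hcs, Matrix.smul_apply, smul_eq_mul]
    ring
  · refine ((hW2lin (c * t) h).const_mul_comp_const_mul s).congr_deriv ?_
    rw [leakyFlow_snd_rescale hcs, Matrix.smul_apply, smul_eq_mul]
    ring

/-- time-rescaled and √(2/(α+1))-rescaled solutions of the two-layer
linear-network gradient flow solve the reduced leaky-ReLU dynamics, and the
implemented linear maps agree: ((α+1)/2)·W₂(t)W₁(t) = W₂ˡⁱⁿ(((α+1)/2)t)·W₁ˡⁱⁿ(((α+1)/2)t). -/
theorem stmt_13 (D H : ℕ) (α τ : ℝ) (hα : α ∈ Set.Icc (0 : ℝ) 1) (hτ : 0 < τ)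
    (Sig : Matrix (Fin D) (Fin D) ℝ) (β : Fin D → ℝ)
    (Brow : Matrix (Fin 1) (Fin D) ℝ) (hB : ∀ j, Brow 0 j = β j)
    (W1lin : ℝ → Matrix (Fin H) (Fin D) ℝ) (W2lin : ℝ → Matrix (Fin 1) (Fin H) ℝ)
    (hW1lin : ∀ t h j, HasDerivAt (fun u => W1lin u h j)
      (τ⁻¹ * (((W2lin t)ᵀ * (Brow - W2lin t * W1lin t * Sig)) h j)) t)
    (hW2lin : ∀ t h, HasDerivAt (fun u => W2lin u 0 h)
      (τ⁻¹ * (((Brow - W2lin t * W1lin t * Sig) * (W1lin t)ᵀ) 0 h)) t)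
    (W1 : ℝ → Matrix (Fin H) (Fin D) ℝ) (W2 : ℝ → Matrix (Fin 1) (Fin H) ℝ)
    (hW1 : ∀ t, W1 t = Real.sqrt (2 / (α + 1)) • W1lin (((α + 1) / 2) * t))
    (hW2 : ∀ t, W2 t = Real.sqrt (2 / (α + 1)) • W2lin (((α + 1) / 2) * t)) :
    (∀ t h j, HasDerivAt (fun u => W1 u h j)
      (τ⁻¹ * (((((α + 1) / 2) • ((W2 t)ᵀ * Brow)
        - (((α + 1) / 2) ^ 2) • ((W2 t)ᵀ * W2 t * W1 t * Sig) :
          Matrix (Fin H) (Fin D) ℝ)) h j)) t) ∧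
    (∀ t h, HasDerivAt (fun u => W2 u 0 h)
      (τ⁻¹ * (((((α + 1) / 2) • (Brow * (W1 t)ᵀ)
        - (((α + 1) / 2) ^ 2) • (W2 t * W1 t * Sig * (W1 t)ᵀ) :
          Matrix (Fin 1) (Fin H) ℝ)) 0 h)) t) ∧
    (∀ t, ((α + 1) / 2) • (W2 t * W1 t)
      = W2lin (((α + 1) / 2) * t) * W1lin (((α + 1) / 2) * t)) :=
  stmt_13_general D H α τ hα Sig Brow W1lin W2lin hW1lin hW2lin W1 W2 hW1 hW2
end

section
/- Let {(x_μ, y_μ)}_{μ=1}^P ⊂ ℝ^D × ℝ be a symmetric dataset. Let f : ℝ^D → ℝ have the form f(x) = wᵀx + f_e(x), where w ∈ ℝ^D and f_e is even (f_e(x) = f_e(−x) for all x). Then the empirical square loss decomposes as (1/2P)·∑_{μ=1}^P (y_μ − f(x_μ))² = (1/2P)·∑_{μ=1}^P (y_μ − wᵀx_μ)² + (1/2P)·∑_{μ=1}^P f_e(x_μ)². -/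
/-!
The residual `y - wᵀx` of the linear part is odd across the symmetric pairs while `f_e` is even,
so their product is odd and sums to zero over the dataset. Hence the residual and `f_e` are
orthogonal in `ℝ^P`, and the loss splits by Pythagoras.
-/

open Finset

lemma Fintype.sum_eq_zero_of_comp_perm_eq_neg {ι G : Type*} [Fintype ι] [AddCommGroup G]
    [IsAddTorsionFree G] (π : Equiv.Perm ι) (g : ι → G) (hg : ∀ i, g (π i) = -g i) :
    ∑ i, g i = 0 :=
  self_eq_neg.mp <| calc
    ∑ i, g i = ∑ i, g (π i) := (Equiv.sum_comp π g).symm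
    _ = -∑ i, g i := by simp only [hg, sum_neg_distrib]

lemma Finset.sum_sub_sq_of_sum_mul_eq_zero {ι R : Type*} [CommRing R] (s : Finset ι)
    (a b : ι → R) (hab : ∑ i ∈ s, a i * b i = 0) :
    ∑ i ∈ s, (a i - b i) ^ 2 = ∑ i ∈ s, a i ^ 2 + ∑ i ∈ s, b i ^ 2 := by
  have hexpand : ∀ i, (a i - b i) ^ 2 = a i ^ 2 + b i ^ 2 - 2 * (a i * b i) := fun i => by ring
  simp only [hexpand, sum_sub_distrib, sum_add_distrib, ← mul_sum, hab, mul_zero, sub_zero]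

/-- on a symmetric dataset, the square loss of f(x) = wᵀx + f_e(x)
with f_e even decomposes as the loss of the linear part plus the average of f_e². -/
theorem stmt_15 (D P : ℕ) (x : Fin P → Fin D → ℝ) (y : Fin P → ℝ)
    (hsym : ∃ π : Equiv.Perm (Fin P), ∀ μ, x (π μ) = -x μ ∧ y (π μ) = -y μ)
    (w : Fin D → ℝ) (fe : (Fin D → ℝ) → ℝ)
    (hfe : ∀ v, fe v = fe (-v))
    (f : (Fin D → ℝ) → ℝ)
    (hf : ∀ v, f v = (∑ i, w i * v i) + fe v) :
    (1 / (2 * (P : ℝ))) * ∑ μ, (y μ - f (x μ)) ^ 2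
      = (1 / (2 * (P : ℝ))) * ∑ μ, (y μ - ∑ i, w i * x μ i) ^ 2
        + (1 / (2 * (P : ℝ))) * ∑ μ, fe (x μ) ^ 2 := by
  obtain ⟨π, hπ⟩ := hsym
  have horth : ∑ μ, (y μ - ∑ i, w i * x μ i) * fe (x μ) = 0 := by
    refine Fintype.sum_eq_zero_of_comp_perm_eq_neg π _ fun μ => ?_
    have hlin : ∑ i, w i * (-x μ) i = -∑ i, w i * x μ i := dotProduct_neg w (x μ)
    rw [(hπ μ).1, (hπ μ).2, hlin, ← hfe]
    ring
  simp only [hf, ← sub_sub]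
  rw [sum_sub_sq_of_sum_mul_eq_zero _ _ _ horth, mul_add]
end

section
/- Under the hypotheses of the orthonormal-data block-weight setup — inputs x_μᵀx_ν = 0 for μ ≠ ν, x_μᵀx_μ = 1, y_μ ≠ 0, S_A = {μ : y_μ > 0}, S_B = {μ : y_μ < 0}, weights W₁ᴬ = u_A·r_A·β̄_Aᵀ, W₁ᴮ = u_B·r_B·β̄_Bᵀ, W₂ᴬ = u_A·r_Aᵀ, W₂ᴮ = −u_B·r_Bᵀ with u_A, u_B > 0 and unit vectors r_A, r_B with nonnegative entries, σ(z) = max(z,0), σ'(z) = 1 for z > 0 and σ'(z) = 0 for z ≤ 0 — the square-loss gradient with respect to each block equals a linear-network gradient on the corresponding data subset: for C ∈ {A, B}, (1/P)·∑_{μ=1}^P σ'(W₁ᶜx_μ) ⊙ (W₂ᶜ)ᵀ·(y_μ − W₂σ(W₁x_μ))·x_μᵀ = (W₂ᶜ)ᵀ·(β_Cᵀ − W₂ᶜW₁ᶜΣ_C) and (1/P)·∑_{μ=1}^P (y_μ − W₂σ(W₁x_μ))·σ(W₁ᶜx_μ)ᵀ = (β_Cᵀ − W₂ᶜW₁ᶜΣ_C)·(W₁ᶜ)ᵀ,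 where β_C = (1/P)·∑_{μ∈S_C} y_μx_μ and Σ_C = (1/P)·∑_{μ∈S_C} x_μx_μᵀ. -/
/-!
With orthonormal inputs, `⟨b_A, x_μ⟩` equals `y_μ` on `S_A` and `0` elsewhere, so an A-unit's
pre-activation is a nonnegative multiple of `y_μ` on `S_A` and vanishes off it (symmetrically
for B, where the sign of `W₂ᴮ` compensates the sign of `y_μ`). Hence ReLU is the identity on the
A-block over `S_A` and silences it elsewhere, while on `S_A` the B-block is silent; there the
network output is the linear output `W₂ᴬW₁ᴬx_μ`. Both ReLU gradients thus become sums over `S_A`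
of linear-network residuals, and such a sum is exactly `β_A − W₂ᴬW₁ᴬΣ_A` (times the usual factors).
-/

open Finset

section LinearNetwork

variable {ι n : Type*} [Fintype n]

theorem sum_smul_dotProduct_of_orthonormal [DecidableEq ι] {x : ι → n → ℝ}
    (horth : ∀ μ ν, μ ≠ ν → x μ ⬝ᵥ x ν = 0) (hnorm : ∀ μ, x μ ⬝ᵥ x μ = 1)
    (S : Finset ι) (a : ι → ℝ) (μ : ι) :
    (∑ ν ∈ S, a ν • x ν) ⬝ᵥ x μ = if μ ∈ S then a μ else 0 := by
  have hdelta : ∀ ν, x ν ⬝ᵥ x μ = if ν = μ then 1 else 0 := fun ν => by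
    split_ifs with h
    · exact h ▸ hnorm μ
    · exact horth ν μ h
  simp [sum_dotProduct, smul_dotProduct, hdelta]

theorem linearGrad_eq_sum_residual {c : ℝ} {S : Finset ι} {x : ι → n → ℝ} {y : ι → ℝ}
    {β : n → ℝ} (hβ : β = c • ∑ μ ∈ S, y μ • x μ)
    {C : n → n → ℝ} (hC : ∀ i j, C i j = c * ∑ μ ∈ S, x μ i * x μ j) (M : n → ℝ) (j : n) :
    β j - ∑ i, M i * C i j = c * ∑ μ ∈ S, (y μ - M ⬝ᵥ x μ) * x μ j := by
  simp only [hβ, hC, Pi.smul_apply, Finset.sum_apply, smul_eq_mul, dotProduct, mul_sum, sub_mul,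
    sum_mul, sum_sub_distrib, mul_sub]
  rw [sum_comm]
  congr 1
  exact sum_congr rfl fun i _ => sum_congr rfl fun μ _ => by ring

end LinearNetwork

theorem sqrt_sum_sq_pos_of_dotProduct_ne_zero {n : Type*} [Fintype n] {b v : n → ℝ}
    (hbv : b ⬝ᵥ v ≠ 0) : 0 < √(∑ i, b i ^ 2) := by
  obtain ⟨i, hi⟩ := Function.ne_iff.1 fun hb : b = 0 => hbv (hb ▸ zero_dotProduct v)
  exact Real.sqrt_pos.2 <|
    sum_pos' (fun j _ => sq_nonneg _) ⟨i, mem_univ i, pow_two_pos_of_ne_zero hi⟩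

section ReluBlock

variable {ι n κ : Type*} [Fintype n] [DecidableEq ι]
  {S : Finset ι} {x : ι → n → ℝ} {y : ι → ℝ} {W : κ → n → ℝ} {w : κ → ℝ} {b : n → ℝ}

theorem dotProduct_eq_of_aligned (hb : ∀ μ, b ⬝ᵥ x μ = if μ ∈ S then y μ else 0)
    (hW : ∀ h i, W h i = (√(∑ i, b i ^ 2))⁻¹ * w h * b i) (h : κ) (μ : ι) :
    W h ⬝ᵥ x μ = (√(∑ i, b i ^ 2))⁻¹ * (w h * if μ ∈ S then y μ else 0) := by
  rw [← hb]
  simp only [dotProduct, hW, mul_sum, mul_assoc]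

theorem inv_sqrt_sum_sq_pos_of_mem (hb : ∀ μ, b ⬝ᵥ x μ = if μ ∈ S then y μ else 0)
    (hy : ∀ μ ∈ S, y μ ≠ 0) {μ : ι} (hμ : μ ∈ S) : 0 < (√(∑ i, b i ^ 2))⁻¹ :=
  inv_pos.2 <| sqrt_sum_sq_pos_of_dotProduct_ne_zero (v := x μ) <| by
    rw [hb, if_pos hμ]; exact hy μ hμ

theorem max_dotProduct_eq_ite (hb : ∀ μ, b ⬝ᵥ x μ = if μ ∈ S then y μ else 0)
    (hW : ∀ h i, W h i = (√(∑ i, b i ^ 2))⁻¹ * w h * b i)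
    (hsign : ∀ h, ∀ μ ∈ S, 0 ≤ w h * y μ) (hy : ∀ μ ∈ S, y μ ≠ 0) (h : κ) (μ : ι) :
    max (W h ⬝ᵥ x μ) 0 = if μ ∈ S then W h ⬝ᵥ x μ else 0 := by
  rw [dotProduct_eq_of_aligned hb hW]
  split_ifs with hμ
  · exact max_eq_left (mul_nonneg (inv_sqrt_sum_sq_pos_of_mem hb hy hμ).le (hsign h μ hμ))
  · simp

theorem ite_pos_dotProduct_mul_eq_ite (hb : ∀ μ, b ⬝ᵥ x μ = if μ ∈ S then y μ else 0)
    (hW : ∀ h i, W h i = (√(∑ i, b i ^ 2))⁻¹ * w h * b i)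
    (hsign : ∀ h, ∀ μ ∈ S, 0 ≤ w h * y μ) (hy : ∀ μ ∈ S, y μ ≠ 0) (h : κ) (μ : ι) :
    (if 0 < W h ⬝ᵥ x μ then (1 : ℝ) else 0) * w h = if μ ∈ S then w h else 0 := by
  rw [dotProduct_eq_of_aligned hb hW]
  by_cases hμ : μ ∈ S
  · by_cases hw : w h = 0
    · simp [hw]
    have hwy : 0 < w h * y μ := (hsign h μ hμ).lt_of_ne (mul_ne_zero hw (hy μ hμ)).symm
    simp [hμ, mul_pos (inv_sqrt_sum_sq_pos_of_mem hb hy hμ) hwy]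
  · simp [hμ]

variable [Fintype κ]

theorem sum_mul_max_dotProduct_eq_ite
    (hrelu : ∀ h μ, max (W h ⬝ᵥ x μ) 0 = if μ ∈ S then W h ⬝ᵥ x μ else 0) (μ : ι) :
    ∑ h, w h * max (W h ⬝ᵥ x μ) 0 =
      if μ ∈ S then (fun i => ∑ h, w h * W h i) ⬝ᵥ x μ else 0 := by
  split_ifs with hμ
  · simp only [hrelu, if_pos hμ]
    simp only [dotProduct, sum_mul, mul_sum, mul_assoc]
    exact sum_comm
  · simp [hrelu, hμ]

theorem sum_mul_max_add_sum_mul_max_eq_of_mem {κ' : Type*} [Fintype κ'] {S' : Finset ι}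
    {W' : κ' → n → ℝ} {w' : κ' → ℝ}
    (hrelu : ∀ h μ, max (W h ⬝ᵥ x μ) 0 = if μ ∈ S then W h ⬝ᵥ x μ else 0)
    (hrelu' : ∀ h μ, max (W' h ⬝ᵥ x μ) 0 = if μ ∈ S' then W' h ⬝ᵥ x μ else 0)
    (hdisj : Disjoint S S') {μ : ι} (hμ : μ ∈ S) :
    ∑ h, w h * max (W h ⬝ᵥ x μ) 0 + ∑ h, w' h * max (W' h ⬝ᵥ x μ) 0
      = (fun i => ∑ h, w h * W h i) ⬝ᵥ x μ := by
  rw [sum_mul_max_dotProduct_eq_ite hrelu, sum_mul_max_dotProduct_eq_ite hrelu', if_pos hμ,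
    if_neg (disjoint_left.1 hdisj hμ), add_zero]

variable [Fintype ι] {c : ℝ} {β : n → ℝ} {C : n → n → ℝ} {f : (n → ℝ) → ℝ}

theorem firstLayerGrad_eq_linearGrad (hβ : β = c • ∑ μ ∈ S, y μ • x μ)
    (hC : ∀ i j, C i j = c * ∑ μ ∈ S, x μ i * x μ j)
    (hf : ∀ μ ∈ S, f (x μ) = (fun i => ∑ h, w h * W h i) ⬝ᵥ x μ)
    (hgate : ∀ h μ, (if 0 < W h ⬝ᵥ x μ then (1 : ℝ) else 0) * w h = if μ ∈ S then w h else 0)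
    (h : κ) (j : n) :
    c * ∑ μ, (if 0 < W h ⬝ᵥ x μ then (1 : ℝ) else 0) * (w h * (y μ - f (x μ))) * x μ j
      = w h * (β j - ∑ i, (∑ h', w h' * W h' i) * C i j) := by
  have hterm : ∀ μ, (if 0 < W h ⬝ᵥ x μ then (1 : ℝ) else 0) * (w h * (y μ - f (x μ))) * x μ j
      = if μ ∈ S then w h * ((y μ - (fun i => ∑ h', w h' * W h' i) ⬝ᵥ x μ) * x μ j) else 0 := by
    intro μ
    rw [← mul_assoc, hgate]
    split_ifs with hμ
    · rw [hf μ hμ, mul_assoc]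
    · ring
  rw [linearGrad_eq_sum_residual hβ hC, sum_congr rfl fun μ _ => hterm μ, sum_ite_mem_eq,
    ← mul_sum]
  ring

theorem secondLayerGrad_eq_linearGrad (hβ : β = c • ∑ μ ∈ S, y μ • x μ)
    (hC : ∀ i j, C i j = c * ∑ μ ∈ S, x μ i * x μ j)
    (hf : ∀ μ ∈ S, f (x μ) = (fun i => ∑ h, w h * W h i) ⬝ᵥ x μ)
    (hrelu : ∀ h μ, max (W h ⬝ᵥ x μ) 0 = if μ ∈ S then W h ⬝ᵥ x μ else 0) (h : κ) :
    c * ∑ μ, (y μ - f (x μ)) * max (W h ⬝ᵥ x μ) 0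
      = ∑ j, (β j - ∑ i, (∑ h', w h' * W h' i) * C i j) * W h j := by
  have hterm : ∀ μ, (y μ - f (x μ)) * max (W h ⬝ᵥ x μ) 0
      = if μ ∈ S then (y μ - (fun i => ∑ h', w h' * W h' i) ⬝ᵥ x μ) * (W h ⬝ᵥ x μ) else 0 := by
    intro μ
    rw [hrelu]
    split_ifs with hμ
    · rw [hf μ hμ]
    · ring
  rw [sum_congr rfl fun μ _ => hterm μ, sum_ite_mem_eq]
  simp_rw [linearGrad_eq_sum_residual hβ hC]
  simp only [mul_sum, sum_mul]
  rw [sum_comm]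
  refine sum_congr rfl fun μ _ => ?_
  simp only [dotProduct, mul_sum]
  exact sum_congr rfl fun j _ => by ring

end ReluBlock

theorem stmt_18_general (D P HA HB : ℕ)
    (x : Fin P → Fin D → ℝ) (y : Fin P → ℝ)
    (horth : ∀ μ ν, μ ≠ ν → ∑ i, x μ i * x ν i = 0)
    (hnorm : ∀ μ, ∑ i, x μ i * x μ i = 1)
    (bA : Fin D → ℝ)
    (hbA : bA = ∑ μ ∈ Finset.filter (fun μ => 0 < y μ) Finset.univ, y μ • x μ)
    (bB : Fin D → ℝ)
    (hbB : bB = ∑ μ ∈ Finset.filter (fun μ => y μ < 0) Finset.univ, y μ • x μ)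
    (bbA : Fin D → ℝ) (hbbA : bbA = (Real.sqrt (∑ i, bA i ^ 2))⁻¹ • bA)
    (bbB : Fin D → ℝ) (hbbB : bbB = -((Real.sqrt (∑ i, bB i ^ 2))⁻¹ • bB))
    (uA uB : ℝ) (huA : 0 < uA) (huB : 0 < uB)
    (rA : Fin HA → ℝ) (rB : Fin HB → ℝ)
    (hrA0 : ∀ h, 0 ≤ rA h) (hrB0 : ∀ h, 0 ≤ rB h)
    (W1A : Fin HA → Fin D → ℝ) (hW1A : ∀ h i, W1A h i = uA * rA h * bbA i)
    (W1B : Fin HB → Fin D → ℝ) (hW1B : ∀ h i, W1B h i = uB * rB h * bbB i)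
    (f : (Fin D → ℝ) → ℝ)
    (hf : ∀ v, f v = (∑ h, (uA * rA h) * max (∑ i, W1A h i * v i) 0)
                   + ∑ h, (-(uB * rB h)) * max (∑ i, W1B h i * v i) 0)
    (βA : Fin D → ℝ)
    (hβA : βA = (P : ℝ)⁻¹ • ∑ μ ∈ Finset.filter (fun μ => 0 < y μ) Finset.univ,
      y μ • x μ)
    (βB : Fin D → ℝ)
    (hβB : βB = (P : ℝ)⁻¹ • ∑ μ ∈ Finset.filter (fun μ => y μ < 0) Finset.univ,
      y μ • x μ)
    (SA : Fin D → Fin D → ℝ)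
    (hSA : ∀ i j, SA i j = (P : ℝ)⁻¹ *
      ∑ μ ∈ Finset.filter (fun μ => 0 < y μ) Finset.univ, x μ i * x μ j)
    (SB : Fin D → Fin D → ℝ)
    (hSB : ∀ i j, SB i j = (P : ℝ)⁻¹ *
      ∑ μ ∈ Finset.filter (fun μ => y μ < 0) Finset.univ, x μ i * x μ j) :
    (∀ h j, (P : ℝ)⁻¹ * ∑ μ,
        (if 0 < ∑ i, W1A h i * x μ i then (1 : ℝ) else 0) *
          ((uA * rA h) * (y μ - f (x μ))) * x μ j
      = (uA * rA h) * (βA j - ∑ i, (∑ h', (uA * rA h') * W1A h' i) * SA i j)) ∧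
    (∀ h, (P : ℝ)⁻¹ * ∑ μ, (y μ - f (x μ)) * max (∑ i, W1A h i * x μ i) 0
      = ∑ j, (βA j - ∑ i, (∑ h', (uA * rA h') * W1A h' i) * SA i j) * W1A h j) ∧
    (∀ h j, (P : ℝ)⁻¹ * ∑ μ,
        (if 0 < ∑ i, W1B h i * x μ i then (1 : ℝ) else 0) *
          ((-(uB * rB h)) * (y μ - f (x μ))) * x μ j
      = (-(uB * rB h)) * (βB j - ∑ i, (∑ h', (-(uB * rB h')) * W1B h' i) * SB i j)) ∧
    (∀ h, (P : ℝ)⁻¹ * ∑ μ, (y μ - f (x μ)) * max (∑ i, W1B h i * x μ i) 0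
      = ∑ j, (βB j - ∑ i, (∑ h', (-(uB * rB h')) * W1B h' i) * SB i j) * W1B h j) := by
  set SPos := filter (fun μ => 0 < y μ) univ
  set SNeg := filter (fun μ => y μ < 0) univ
  have hdisj : Disjoint SPos SNeg := disjoint_filter.2 fun μ _ hpos hneg => lt_asymm hpos hneg
  have hb := sum_smul_dotProduct_of_orthonormal horth hnorm (a := y)
  have hbA' : ∀ μ, bA ⬝ᵥ x μ = if μ ∈ SPos then y μ else 0 := hbA ▸ hb SPos
  have hbB' : ∀ μ, bB ⬝ᵥ x μ = if μ ∈ SNeg then y μ else 0 := hbB ▸ hb SNeg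
  have hWA : ∀ h i, W1A h i = (√(∑ i, bA i ^ 2))⁻¹ * (uA * rA h) * bA i := fun h i => by
    rw [hW1A, hbbA, Pi.smul_apply, smul_eq_mul]; ring
  have hWB : ∀ h i, W1B h i = (√(∑ i, bB i ^ 2))⁻¹ * -(uB * rB h) * bB i := fun h i => by
    rw [hW1B, hbbB, Pi.neg_apply, Pi.smul_apply, smul_eq_mul]; ring
  have hsignA : ∀ h, ∀ μ ∈ SPos, 0 ≤ uA * rA h * y μ := fun h μ hμ =>
    mul_nonneg (mul_nonneg huA.le (hrA0 h)) (mem_filter.1 hμ).2.le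
  have hsignB : ∀ h, ∀ μ ∈ SNeg, 0 ≤ -(uB * rB h) * y μ := fun h μ hμ =>
    mul_nonneg_of_nonpos_of_nonpos (neg_nonpos.2 (mul_nonneg huB.le (hrB0 h)))
      (mem_filter.1 hμ).2.le
  have hyA : ∀ μ ∈ SPos, y μ ≠ 0 := fun μ hμ => (mem_filter.1 hμ).2.ne'
  have hyB : ∀ μ ∈ SNeg, y μ ≠ 0 := fun μ hμ => (mem_filter.1 hμ).2.ne
  have hreluA := max_dotProduct_eq_ite hbA' hWA hsignA hyA
  have hreluB := max_dotProduct_eq_ite hbB' hWB hsignB hyB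
  have hf' : ∀ v, f v = (∑ h, (uA * rA h) * max (W1A h ⬝ᵥ v) 0)
      + ∑ h, (-(uB * rB h)) * max (W1B h ⬝ᵥ v) 0 := hf
  have hfA : ∀ μ ∈ SPos, f (x μ) = (fun i => ∑ h, uA * rA h * W1A h i) ⬝ᵥ x μ := fun μ hμ =>
    (hf' _).trans (sum_mul_max_add_sum_mul_max_eq_of_mem hreluA hreluB hdisj hμ)
  have hfB : ∀ μ ∈ SNeg, f (x μ) = (fun i => ∑ h, -(uB * rB h) * W1B h i) ⬝ᵥ x μ :=
    fun μ hμ => (hf' _).trans <| (add_comm _ _).trans <|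
      sum_mul_max_add_sum_mul_max_eq_of_mem hreluB hreluA hdisj.symm hμ
  exact ⟨firstLayerGrad_eq_linearGrad hβA hSA hfA
      (ite_pos_dotProduct_mul_eq_ite hbA' hWA hsignA hyA),
    secondLayerGrad_eq_linearGrad hβA hSA hfA hreluA,
    firstLayerGrad_eq_linearGrad hβB hSB hfB
      (ite_pos_dotProduct_mul_eq_ite hbB' hWB hsignB hyB),
    secondLayerGrad_eq_linearGrad hβB hSB hfB hreluB⟩

/-- in the orthonormal-data block-weight setup, the square-loss gradient
with respect to each block of a two-layer bias-free ReLU network (σ'(z) = 1 for z > 0,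
σ'(z) = 0 for z ≤ 0) equals the gradient of a two-layer linear network trained on the
corresponding subset of the data:
(1/P)∑_μ σ'(W₁ᶜxμ) ⊙ (W₂ᶜ)ᵀ(yμ − W₂σ(W₁xμ))xμᵀ = (W₂ᶜ)ᵀ(β_Cᵀ − W₂ᶜW₁ᶜΣ_C) and
(1/P)∑_μ (yμ − W₂σ(W₁xμ))σ(W₁ᶜxμ)ᵀ = (β_Cᵀ − W₂ᶜW₁ᶜΣ_C)(W₁ᶜ)ᵀ, for C ∈ {A, B}. -/
theorem stmt_18 (D P HA HB : ℕ)
    (x : Fin P → Fin D → ℝ) (y : Fin P → ℝ)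
    (horth : ∀ μ ν, μ ≠ ν → ∑ i, x μ i * x ν i = 0)
    (hnorm : ∀ μ, ∑ i, x μ i * x μ i = 1)
    (hy : ∀ μ, y μ ≠ 0)
    (hApos : ∃ μ, 0 < y μ) (hBneg : ∃ μ, y μ < 0)
    (bA : Fin D → ℝ)
    (hbA : bA = ∑ μ ∈ Finset.filter (fun μ => 0 < y μ) Finset.univ, y μ • x μ)
    (bB : Fin D → ℝ)
    (hbB : bB = ∑ μ ∈ Finset.filter (fun μ => y μ < 0) Finset.univ, y μ • x μ)
    (bbA : Fin D → ℝ) (hbbA : bbA = (Real.sqrt (∑ i, bA i ^ 2))⁻¹ • bA)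
    (bbB : Fin D → ℝ) (hbbB : bbB = -((Real.sqrt (∑ i, bB i ^ 2))⁻¹ • bB))
    (uA uB : ℝ) (huA : 0 < uA) (huB : 0 < uB)
    (rA : Fin HA → ℝ) (rB : Fin HB → ℝ)
    (hrA1 : ∑ h, rA h ^ 2 = 1) (hrB1 : ∑ h, rB h ^ 2 = 1)
    (hrA0 : ∀ h, 0 ≤ rA h) (hrB0 : ∀ h, 0 ≤ rB h)
    (W1A : Fin HA → Fin D → ℝ) (hW1A : ∀ h i, W1A h i = uA * rA h * bbA i)
    (W1B : Fin HB → Fin D → ℝ) (hW1B : ∀ h i, W1B h i = uB * rB h * bbB i)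
    (f : (Fin D → ℝ) → ℝ)
    (hf : ∀ v, f v = (∑ h, (uA * rA h) * max (∑ i, W1A h i * v i) 0)
                   + ∑ h, (-(uB * rB h)) * max (∑ i, W1B h i * v i) 0)
    (βA : Fin D → ℝ)
    (hβA : βA = (P : ℝ)⁻¹ • ∑ μ ∈ Finset.filter (fun μ => 0 < y μ) Finset.univ,
      y μ • x μ)
    (βB : Fin D → ℝ)
    (hβB : βB = (P : ℝ)⁻¹ • ∑ μ ∈ Finset.filter (fun μ => y μ < 0) Finset.univ,
      y μ • x μ)
    (SA : Fin D → Fin D → ℝ)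
    (hSA : ∀ i j, SA i j = (P : ℝ)⁻¹ *
      ∑ μ ∈ Finset.filter (fun μ => 0 < y μ) Finset.univ, x μ i * x μ j)
    (SB : Fin D → Fin D → ℝ)
    (hSB : ∀ i j, SB i j = (P : ℝ)⁻¹ *
      ∑ μ ∈ Finset.filter (fun μ => y μ < 0) Finset.univ, x μ i * x μ j) :
    (∀ h j, (P : ℝ)⁻¹ * ∑ μ,
        (if 0 < ∑ i, W1A h i * x μ i then (1 : ℝ) else 0) *
          ((uA * rA h) * (y μ - f (x μ))) * x μ j
      = (uA * rA h) * (βA j - ∑ i, (∑ h', (uA * rA h') * W1A h' i) * SA i j)) ∧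
    (∀ h, (P : ℝ)⁻¹ * ∑ μ, (y μ - f (x μ)) * max (∑ i, W1A h i * x μ i) 0
      = ∑ j, (βA j - ∑ i, (∑ h', (uA * rA h') * W1A h' i) * SA i j) * W1A h j) ∧
    (∀ h j, (P : ℝ)⁻¹ * ∑ μ,
        (if 0 < ∑ i, W1B h i * x μ i then (1 : ℝ) else 0) *
          ((-(uB * rB h)) * (y μ - f (x μ))) * x μ j
      = (-(uB * rB h)) * (βB j - ∑ i, (∑ h', (-(uB * rB h')) * W1B h' i) * SB i j)) ∧
    (∀ h, (P : ℝ)⁻¹ * ∑ μ, (y μ - f (x μ)) * max (∑ i, W1B h i * x μ i) 0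
      = ∑ j, (βB j - ∑ i, (∑ h', (-(uB * rB h')) * W1B h' i) * SB i j) * W1B h j) :=
  stmt_18_general D P HA HB x y horth hnorm bA hbA bB hbB bbA hbbA bbB hbbB uA uB huA huB rA rB hrA0
    hrB0 W1A hW1A W1B hW1B f hf βA hβA βB hβB SA hSA SB hSB
end

section
/- Let σ(z) = max(z, 0) and L ≥ 3. Consider a depth-L bias-free ReLU network f(x) = W_L σ(W_{L-1} σ(⋯ σ(W_1 x))) whose weights have the following form for some u > 0: W₁ = u·r₁·rᵀ with ‖r‖ = ‖r₁‖ = 1; for 2 ≤ l ≤ L−1, each hidden layer l−1 and l carries a partition of its indices into sets P and N with all entries of r_l indexed by P nonnegative and all entries indexed by N nonpositive and ‖(r_l)|_P‖² = ‖(r_l)|_N‖² = 1/2 (similarly for r₁ and r_{L-1}), and (W_l)_{ij} = √2·u·(r_l)_i·(r_{l-1})_j when i and j lie in matching parts (both in P or both in N) and (W_l)_{ij} = 0 otherwise; and W_L = u·r_{L-1}ᵀ. Then all entries of W₂, …, W_{L-1} are nonnegative, the activations after the first layer can be dropped, and the network implements the linear map f(x) = W_L W_{L-1} ⋯ W_2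 σ(W_1 x) = (1/2)·W_L W_{L-1} ⋯ W_1 x = (u/√2)^L · rᵀx for all x ∈ ℝ^D. -/
/-!
Every hidden pre-activation of the network is a multiple of `splitVec (Ppart l) (rr l) tP tN`,
the vector `rr l` rescaled by `tP` on the positive part and by `tN` on the negative part.
A block rank-two layer maps such a vector to the same shape one layer up, scaled by `√2 u / 2`,
because each part of `rr l` has squared norm `1/2`; the last row `u rr_{L-1}ᵀ` returns
`u (tP + tN) / 2` times the accumulated scale. For the linear pass `tP = tN = rᵀx`. After the
first ReLU, `tP = σ(rᵀx)` and `tN = -σ(-rᵀx)`; since the signs of `rr l` match the parts, every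
later activation is nonnegative, so the remaining ReLUs act as the identity, and
`tP + tN = rᵀx` produces the factor `1/2`.
-/

open Matrix Finset

section SignSplit

variable {ι κ : Type*}

def splitVec (P : ι → Prop) [DecidablePred P] (ρ : ι → ℝ) (tP tN : ℝ) : ι → ℝ :=
  fun i => ρ i * if P i then tP else tN

structure IsSignSplit [Fintype ι] (P : ι → Prop) [DecidablePred P] (ρ : ι → ℝ) : Prop where
  nonneg : ∀ i, P i → 0 ≤ ρ i
  nonpos : ∀ i, ¬ P i → ρ i ≤ 0
  sum_sq_pos : ∑ i with P i, ρ i ^ 2 = 1 / 2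
  sum_sq_neg : ∑ i with ¬ P i, ρ i ^ 2 = 1 / 2

variable {P : ι → Prop} [DecidablePred P] {ρ : ι → ℝ}

lemma splitVec_self (t : ℝ) : splitVec P ρ t t = t • ρ := by
  ext i; simp [splitVec, mul_comm]

variable [Fintype ι]

lemma IsSignSplit.sum_sq_filter_iff (h : IsSignSplit P ρ) (q : Prop) [Decidable q] :
    ∑ i with (P i ↔ q), ρ i ^ 2 = 1 / 2 := by
  by_cases hq : q
  · simpa [hq] using h.sum_sq_pos
  · simpa [hq] using h.sum_sq_neg

lemma IsSignSplit.splitVec_nonneg (h : IsSignSplit P ρ) {a b : ℝ} (ha : 0 ≤ a) (hb : 0 ≤ b) :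
    0 ≤ splitVec P ρ a (-b) := fun i => by
  by_cases hi : P i
  · simpa [splitVec, hi] using mul_nonneg (h.nonneg i hi) ha
  · simpa [splitVec, hi] using mul_nonneg_of_nonpos_of_nonpos (h.nonpos i hi) (neg_nonpos.2 hb)

lemma IsSignSplit.relu_smul_splitVec_self (h : IsSignSplit P ρ) {c : ℝ} (hc : 0 ≤ c) (t : ℝ) :
    (fun i => max ((c • splitVec P ρ t t) i) 0) = c • splitVec P ρ (max t 0) (-max (-t) 0) := by
  ext i
  by_cases hi : P i
  · have hmax := mul_max_of_nonneg t 0 (mul_nonneg hc (h.nonneg i hi))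
    simp only [splitVec, hi, if_true, Pi.smul_apply, smul_eq_mul, mul_zero] at hmax ⊢
    rw [← mul_assoc, ← hmax, mul_assoc]
  · have hmax := mul_max_of_nonneg (-t) 0 (mul_nonneg hc (neg_nonneg.2 (h.nonpos i hi)))
    simp only [splitVec, hi, if_false, Pi.smul_apply, smul_eq_mul, mul_zero] at hmax ⊢
    rw [show c * (ρ i * t) = c * -ρ i * -t by ring, ← hmax]
    ring

variable {Q : κ → Prop} [DecidablePred Q] {ρ' : κ → ℝ}

lemma IsSignSplit.mul_nonneg_of_sameSide [Fintype κ] (hQ : IsSignSplit Q ρ')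
    (hP : IsSignSplit P ρ) {i : κ} {j : ι} (hij : (Q i ∧ P j) ∨ (¬ Q i ∧ ¬ P j)) :
    0 ≤ ρ' i * ρ j := by
  rcases hij with ⟨hi, hj⟩ | ⟨hi, hj⟩
  · exact mul_nonneg (hQ.nonneg i hi) (hP.nonneg j hj)
  · exact mul_nonneg_of_nonpos_of_nonpos (hQ.nonpos i hi) (hP.nonpos j hj)

lemma IsSignSplit.mulVec_splitVec (h : IsSignSplit P ρ) (M : Matrix κ ι ℝ) (c : ℝ)
    (hM : ∀ i j, M i j = if (Q i ∧ P j) ∨ (¬ Q i ∧ ¬ P j) then c * ρ' i * ρ j else 0)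
    (tP tN : ℝ) : M *ᵥ splitVec P ρ tP tN = (c / 2) • splitVec Q ρ' tP tN := by
  ext i
  have hsummand : ∀ j, M i j * splitVec P ρ tP tN j
      = if (P j ↔ Q i) then c * ρ' i * (if Q i then tP else tN) * ρ j ^ 2 else 0 := by
    intro j
    by_cases hi : Q i <;> by_cases hj : P j <;> simp [hM, splitVec, hi, hj] <;> ring
  simp only [mulVec, dotProduct, hsummand]
  rw [← sum_filter, ← mul_sum, h.sum_sq_filter_iff]
  simp only [splitVec, Pi.smul_apply, smul_eq_mul]
  ring

lemma IsSignSplit.mulVec_smul_splitVec_apply (h : IsSignSplit P ρ) (M : Matrix κ ι ℝ) (c : ℝ)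
    (hM : ∀ i j, M i j = c * ρ j) (s tP tN : ℝ) (i : κ) :
    (M *ᵥ (s • splitVec P ρ tP tN)) i = c * s * (tP + tN) / 2 := by
  have hsummand : ∀ j, M i j * (s • splitVec P ρ tP tN) j
      = if P j then c * s * tP * ρ j ^ 2 else c * s * tN * ρ j ^ 2 := by
    intro j
    by_cases hj : P j <;> simp [hM, splitVec, hj] <;> ring
  simp only [mulVec, dotProduct, hsummand]
  rw [sum_ite, ← mul_sum, ← mul_sum, h.sum_sq_pos, h.sum_sq_neg]
  ring

end SignSplit

lemma mulVec_eq_smul_of_rankOne {ι κ : Type*} [Fintype ι] (M : Matrix κ ι ℝ) (c : ℝ)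
    (ρ : κ → ℝ) (r : ι → ℝ) (hM : ∀ i j, M i j = c * ρ i * r j) (x : ι → ℝ) :
    M *ᵥ x = (c * r ⬝ᵥ x) • ρ := by
  ext i
  simp only [mulVec, dotProduct, hM, Pi.smul_apply, smul_eq_mul, mul_sum, sum_mul]
  exact sum_congr rfl fun j _ => by ring

lemma sqrt_two_mul_div_sqrt_two_pow_succ (u : ℝ) (l : ℕ) :
    √2 * (u / √2) ^ (l + 1) = √2 * u / 2 * (√2 * (u / √2) ^ l) := by
  have h2 : √2 * √2 = 2 := Real.mul_self_sqrt (by norm_num)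
  rw [pow_succ]
  field_simp
  linear_combination -(u / √2) ^ l * u * h2

lemma mul_sqrt_two_mul_div_sqrt_two_pow (u : ℝ) (l : ℕ) :
    u * (√2 * (u / √2) ^ l) = 2 * (u / √2) ^ (l + 1) := by
  have h2 : √2 * √2 = 2 := Real.mul_self_sqrt (by norm_num)
  rw [pow_succ]
  field_simp
  linear_combination (u / √2) ^ l * u * h2

section Network

variable {dims : ℕ → ℕ} {W : (l : ℕ) → Matrix (Fin (dims (l + 1))) (Fin (dims l)) ℝ}

lemma forward_relu_eq_of_nonneg (n : ℕ) (hid g : (l : ℕ) → Fin (dims l) → ℝ)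
    (hidrec : ∀ l, 1 ≤ l → hid (l + 1) = W l *ᵥ fun i => max (hid l i) 0)
    (grec : ∀ l, 1 ≤ l → g (l + 1) = W l *ᵥ g l)
    (h1 : g 1 = fun i => max (hid 1 i) 0) (hg : ∀ l, 2 ≤ l → l ≤ n → 0 ≤ g l) :
    ∀ l, 2 ≤ l → l ≤ n + 1 → hid l = g l := by
  intro l hl
  induction l, hl using Nat.le_induction with
  | base => intro _; rw [hidrec 1 le_rfl, grec 1 le_rfl, h1]
  | succ l hl ih =>
    intro hln
    have hrelu : (fun i => max (hid l i) 0) = g l := by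
      rw [ih (by omega)]; exact funext fun i => max_eq_left (hg l hl (by omega) i)
    rw [hidrec l (by omega), grec l (by omega), hrelu]

variable {u : ℝ} {n : ℕ} {rr : (l : ℕ) → Fin (dims l) → ℝ}
  {Ppart : (l : ℕ) → Fin (dims l) → Prop} [∀ l, DecidablePred (Ppart l)]

lemma forward_eq_smul_splitVec
    (hparts : ∀ l, 1 ≤ l → l ≤ n → IsSignSplit (Ppart l) (rr l))
    (hW : ∀ l, 1 ≤ l → l < n → ∀ i j, W l i j =
      if (Ppart (l + 1) i ∧ Ppart l j) ∨ (¬ Ppart (l + 1) i ∧ ¬ Ppart l j)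
        then √2 * u * rr (l + 1) i * rr l j else 0)
    (v : (l : ℕ) → Fin (dims l) → ℝ) (hv : ∀ l, 1 ≤ l → l < n → v (l + 1) = W l *ᵥ v l)
    {tP tN : ℝ} (h1 : v 1 = u • splitVec (Ppart 1) (rr 1) tP tN) :
    ∀ l, 1 ≤ l → l ≤ n → v l = (√2 * (u / √2) ^ l) • splitVec (Ppart l) (rr l) tP tN := by
  intro l hl
  induction l, hl using Nat.le_induction with
  | base => intro _; rw [h1, pow_one, mul_div_cancel₀ u (by positivity)]
  | succ l hl ih =>
    intro hln
    rw [hv l hl (by omega), ih (by omega), mulVec_smul,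
      (hparts l hl (by omega)).mulVec_splitVec _ _ (hW l hl (by omega)), smul_smul,
      sqrt_two_mul_div_sqrt_two_pow_succ, mul_comm]

lemma blockRankTwo_nonneg (hu : 0 ≤ u)
    (hparts : ∀ l, 1 ≤ l → l ≤ n → IsSignSplit (Ppart l) (rr l))
    (hW : ∀ l, 1 ≤ l → l < n → ∀ i j, W l i j =
      if (Ppart (l + 1) i ∧ Ppart l j) ∨ (¬ Ppart (l + 1) i ∧ ¬ Ppart l j)
        then √2 * u * rr (l + 1) i * rr l j else 0)
    (l : ℕ) (hl : 1 ≤ l) (hln : l < n) (i : Fin (dims (l + 1))) (j : Fin (dims l)) :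
    0 ≤ W l i j := by
  rw [hW l hl hln]
  split_ifs with hij
  · rw [mul_assoc]
    exact mul_nonneg (by positivity)
      ((hparts (l + 1) (by omega) hln).mul_nonneg_of_sameSide (hparts l hl hln.le) hij)
  · exact le_rfl

lemma forward_last_apply
    (hparts : ∀ l, 1 ≤ l → l ≤ n → IsSignSplit (Ppart l) (rr l))
    (hW : ∀ l, 1 ≤ l → l < n → ∀ i j, W l i j =
      if (Ppart (l + 1) i ∧ Ppart l j) ∨ (¬ Ppart (l + 1) i ∧ ¬ Ppart l j)
        then √2 * u * rr (l + 1) i * rr l j else 0)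
    (hWlast : ∀ i j, W n i j = u * rr n j) (hn : 1 ≤ n)
    (v : (l : ℕ) → Fin (dims l) → ℝ) (hv : ∀ l, 1 ≤ l → l ≤ n → v (l + 1) = W l *ᵥ v l)
    {tP tN : ℝ} (h1 : v 1 = u • splitVec (Ppart 1) (rr 1) tP tN) (i : Fin (dims (n + 1))) :
    v (n + 1) i = (u / √2) ^ (n + 1) * (tP + tN) := by
  rw [hv n hn le_rfl, forward_eq_smul_splitVec hparts hW v (fun l h1 h2 => hv l h1 h2.le) h1 n
    hn le_rfl, (hparts n hn le_rfl).mulVec_smul_splitVec_apply _ _ hWlast,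
    mul_sqrt_two_mul_div_sqrt_two_pow]
  ring

end Network

theorem stmt_19_general (L : ℕ) (hL : 3 ≤ L) (u : ℝ) (hu : 0 < u)
    (dims : ℕ → ℕ)
    (r : Fin (dims 0) → ℝ)
    (rr : (l : ℕ) → Fin (dims l) → ℝ)
    (Ppart : (l : ℕ) → Fin (dims l) → Prop) [∀ l, DecidablePred (Ppart l)]
    (hparts : ∀ l, 1 ≤ l → l ≤ L - 1 →
      (∀ i, Ppart l i → 0 ≤ rr l i) ∧
      (∀ i, ¬ Ppart l i → rr l i ≤ 0) ∧
      (∑ i ∈ Finset.filter (fun i => Ppart l i) Finset.univ, rr l i ^ 2 = 1 / 2) ∧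
      (∑ i ∈ Finset.filter (fun i => ¬ Ppart l i) Finset.univ, rr l i ^ 2 = 1 / 2))
    (W : (l : ℕ) → Matrix (Fin (dims (l + 1))) (Fin (dims l)) ℝ)
    (hW1 : ∀ i j, W 0 i j = u * rr 1 i * r j)
    (hWmid : ∀ l, 1 ≤ l → l ≤ L - 2 →
      ∀ (i : Fin (dims (l + 1))) (j : Fin (dims l)),
        W l i j = if (Ppart (l + 1) i ∧ Ppart l j) ∨ (¬ Ppart (l + 1) i ∧ ¬ Ppart l j)
          then Real.sqrt 2 * u * rr (l + 1) i * rr l j else 0)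
    (hWL : ∀ (i : Fin (dims (L - 1 + 1))) (j : Fin (dims (L - 1))),
      W (L - 1) i j = u * rr (L - 1) j)
    (hid : (Fin (dims 0) → ℝ) → (l : ℕ) → Fin (dims l) → ℝ)
    (hid1 : ∀ x, hid x 1 = W 0 *ᵥ x)
    (hidrec : ∀ x l, 1 ≤ l → hid x (l + 1) = W l *ᵥ fun i => max (hid x l i) 0)
    (g : (Fin (dims 0) → ℝ) → (l : ℕ) → Fin (dims l) → ℝ)
    (g1 : ∀ x, g x 1 = fun i => max ((W 0 *ᵥ x) i) 0)
    (grec : ∀ x l, 1 ≤ l → g x (l + 1) = W l *ᵥ g x l)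
    (p : (Fin (dims 0) → ℝ) → (l : ℕ) → Fin (dims l) → ℝ)
    (p1 : ∀ x, p x 1 = W 0 *ᵥ x)
    (prec : ∀ x l, 1 ≤ l → p x (l + 1) = W l *ᵥ p x l) :
    (∀ l, 1 ≤ l → l ≤ L - 2 → ∀ (i : Fin (dims (l + 1))) (j : Fin (dims l)),
      0 ≤ W l i j) ∧
    (∀ x, hid x L = g x L) ∧
    (∀ x, hid x L = (1 / 2 : ℝ) • p x L) ∧
    (∀ x (i : Fin (dims L)),
      hid x L i = (u / Real.sqrt 2) ^ L * ∑ j, r j * x j) := by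
  obtain ⟨n, rfl⟩ : ∃ n, L = n + 1 := ⟨L - 1, by omega⟩
  have hsplit : ∀ l, 1 ≤ l → l ≤ n → IsSignSplit (Ppart l) (rr l) := fun l h1 h2 =>
    let ⟨hP, hN, hsP, hsN⟩ := hparts l h1 (by omega); ⟨hP, hN, hsP, hsN⟩
  have hW : ∀ l, 1 ≤ l → l < n → _ := fun l h1 h2 => hWmid l h1 (by omega)
  have hWlast : ∀ i j, W n i j = u * rr n j := hWL
  have hW0 : ∀ x, W 0 *ᵥ x = u • splitVec (Ppart 1) (rr 1) (r ⬝ᵥ x) (r ⬝ᵥ x) := fun x => by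
    rw [mulVec_eq_smul_of_rankOne _ _ _ _ hW1, splitVec_self, smul_smul]
  have hg1 : ∀ x, g x 1 = u • splitVec (Ppart 1) (rr 1) (max (r ⬝ᵥ x) 0) (-max (-(r ⬝ᵥ x)) 0) :=
    fun x => by rw [g1, hW0, (hsplit 1 le_rfl (by omega)).relu_smul_splitVec_self hu.le]
  have hid_eq_g : ∀ x, hid x (n + 1) = g x (n + 1) := fun x =>
    forward_relu_eq_of_nonneg n (hid x) (g x) (hidrec x) (grec x) (by rw [g1, hid1])
      (fun l h1 h2 => by
        rw [forward_eq_smul_splitVec hsplit hW (g x) (fun l h1 _ => grec x l h1) (hg1 x) l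
          (by omega) h2]
        exact smul_nonneg (by positivity)
          ((hsplit l (by omega) h2).splitVec_nonneg (le_max_right _ _) (le_max_right _ _)))
      (n + 1) (by omega) le_rfl
  have hgL : ∀ x i, g x (n + 1) i = (u / √2) ^ (n + 1) * (r ⬝ᵥ x) := fun x i => by
    rw [forward_last_apply hsplit hW hWlast (by omega) (g x) (fun l h1 _ => grec x l h1) (hg1 x),
      ← sub_eq_add_neg, max_zero_sub_max_neg_zero_eq_self]
  have hpL : ∀ x i, p x (n + 1) i = 2 * ((u / √2) ^ (n + 1) * (r ⬝ᵥ x)) := fun x i => by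
    rw [forward_last_apply hsplit hW hWlast (by omega) (p x) (fun l h1 _ => prec x l h1)
      (by rw [p1, hW0])]
    ring
  refine ⟨fun l h1 h2 => blockRankTwo_nonneg hu.le hsplit hW l h1 (by omega), hid_eq_g,
    fun x => funext fun i => ?_, fun x i => by rw [hid_eq_g, hgL]; rfl⟩
  rw [Pi.smul_apply, hid_eq_g, hgL, hpL, smul_eq_mul]
  ring

/-- a depth-L (L ≥ 3) bias-free ReLU network whose weights have the
rank-one / block rank-two structure W₁ = u r₁ rᵀ, (W_l)_{ij} = √2·u·(r_l)_i·(r_{l-1})_j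
on matching parts of the sign partitions (and 0 otherwise) for 2 ≤ l ≤ L−1, and
W_L = u r_{L−1}ᵀ, has nonnegative intermediate weights, its activations after the first
layer can be dropped, and it implements the linear map
f(x) = W_L ⋯ W₂ σ(W₁x) = (1/2)·W_L ⋯ W₁ x = (u/√2)^L · rᵀx.
Here `W l` is the matrix of layer l+1 (so the paper's W_l is `W (l-1)`), `hid` is the
ReLU forward pass, `g` the forward pass with all activations after the first dropped,
and `p` the purely linear forward pass. -/
theorem stmt_19 (L : ℕ) (hL : 3 ≤ L) (u : ℝ) (hu : 0 < u)
    (dims : ℕ → ℕ) (hdL : dims L = 1)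
    (r : Fin (dims 0) → ℝ) (hr : ∑ i, r i ^ 2 = 1)
    (rr : (l : ℕ) → Fin (dims l) → ℝ)
    (Ppart : (l : ℕ) → Fin (dims l) → Prop) [∀ l, DecidablePred (Ppart l)]
    (hparts : ∀ l, 1 ≤ l → l ≤ L - 1 →
      (∀ i, Ppart l i → 0 ≤ rr l i) ∧
      (∀ i, ¬ Ppart l i → rr l i ≤ 0) ∧
      (∑ i ∈ Finset.filter (fun i => Ppart l i) Finset.univ, rr l i ^ 2 = 1 / 2) ∧
      (∑ i ∈ Finset.filter (fun i => ¬ Ppart l i) Finset.univ, rr l i ^ 2 = 1 / 2))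
    (hr1 : ∑ i, rr 1 i ^ 2 = 1)
    (W : (l : ℕ) → Matrix (Fin (dims (l + 1))) (Fin (dims l)) ℝ)
    (hW1 : ∀ i j, W 0 i j = u * rr 1 i * r j)
    (hWmid : ∀ l, 1 ≤ l → l ≤ L - 2 →
      ∀ (i : Fin (dims (l + 1))) (j : Fin (dims l)),
        W l i j = if (Ppart (l + 1) i ∧ Ppart l j) ∨ (¬ Ppart (l + 1) i ∧ ¬ Ppart l j)
          then Real.sqrt 2 * u * rr (l + 1) i * rr l j else 0)
    (hWL : ∀ (i : Fin (dims (L - 1 + 1))) (j : Fin (dims (L - 1))),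
      W (L - 1) i j = u * rr (L - 1) j)
    (hid : (Fin (dims 0) → ℝ) → (l : ℕ) → Fin (dims l) → ℝ)
    (hid1 : ∀ x, hid x 1 = W 0 *ᵥ x)
    (hidrec : ∀ x l, 1 ≤ l → hid x (l + 1) = W l *ᵥ fun i => max (hid x l i) 0)
    (g : (Fin (dims 0) → ℝ) → (l : ℕ) → Fin (dims l) → ℝ)
    (g1 : ∀ x, g x 1 = fun i => max ((W 0 *ᵥ x) i) 0)
    (grec : ∀ x l, 1 ≤ l → g x (l + 1) = W l *ᵥ g x l)
    (p : (Fin (dims 0) → ℝ) → (l : ℕ) → Fin (dims l) → ℝ)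
    (p1 : ∀ x, p x 1 = W 0 *ᵥ x)
    (prec : ∀ x l, 1 ≤ l → p x (l + 1) = W l *ᵥ p x l) :
    (∀ l, 1 ≤ l → l ≤ L - 2 → ∀ (i : Fin (dims (l + 1))) (j : Fin (dims l)),
      0 ≤ W l i j) ∧
    (∀ x, hid x L = g x L) ∧
    (∀ x, hid x L = (1 / 2 : ℝ) • p x L) ∧
    (∀ x (i : Fin (dims L)),
      hid x L i = (u / Real.sqrt 2) ^ L * ∑ j, r j * x j) :=
  stmt_19_general L hL u hu dims r rr Ppart hparts W hW1 hWmid hWL hid hid1 hidrec g g1 grec p p1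
    prec
end
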